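/- arXiv:2511.16558 — 7 statements merged into one kernel-verified Lean document; each statement's English description precedes it below -/
import Mathlib

section
/- Let μ be the probability distribution on perfect matchings of G□K₂ defined by μ(M) = w(M)/Z_n. Then for every S⊆V, the μ-probability that the set of vertices covered by the copy-1 edges of M equals S×{1} is exactly c^{2|S|}·PM(S)² / Σ_{T⊆V} c^{2|T|}·PM(T)². In other words, the pushforward of μ under the map M ↦ S_M (where S_M ⊆ V is the set of vertices matched by M within the first copy of G) equals the distribution μ_{GBS,G}(S) ∝ c^{2|S|}·PM(S)². -/
open scoped Classical

/-- `M` is a matching of `G`: a finite set of edges of `G` that are pairwise vertex-disjoint. -/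
def IsMatchingSet {α : Type*} (G : SimpleGraph α) (M : Finset (Sym2 α)) : Prop :=
  (∀ e ∈ M, e ∈ G.edgeSet) ∧ ∀ e ∈ M, ∀ f ∈ M, e ≠ f → ∀ v, v ∈ e → v ∉ f

/-- The set of vertices covered by a set of edges `M`. -/
noncomputable def coveredBy {α : Type*} [Fintype α] (M : Finset (Sym2 α)) : Finset α :=
  Finset.univ.filter fun v => ∃ e ∈ M, v ∈ e

/-- `PMcount G S` is the number of perfect matchings of the induced subgraph `G[S]`,
i.e. the number of matchings of `G` covering exactly the vertex set `S`. -/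
noncomputable def PMcount {α : Type*} [Fintype α] (G : SimpleGraph α) (S : Finset α) : ℕ :=
  (Finset.univ.filter fun M : Finset (Sym2 α) => IsMatchingSet G M ∧ coveredBy M = S).card

/-- The weight of a set of edges `M` of `G □ K₂`: `c ^ (2t)` where `t` is the number of
copy edges (edges lying within one of the two copies of `G`) in `M`. -/
noncomputable def wK2 {V : Type*} (c : ℝ) (M : Finset (Sym2 (V × Fin 2))) : ℝ :=
  c ^ (2 * (M.filter fun e => (Sym2.map Prod.snd e).IsDiag).card)

/-- `Zk G c k` is the total weight of the `k`-edge matchings of `G □ K₂`,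
where copy edges have weight `c ^ 2` and rung edges have weight `1`. -/
noncomputable def Zk {V : Type*} [Fintype V] (G : SimpleGraph V) (c : ℝ) (k : ℕ) : ℝ :=
  ∑ M ∈ Finset.univ.filter (fun M : Finset (Sym2 (V × Fin 2)) =>
      IsMatchingSet (G.boxProd (⊤ : SimpleGraph (Fin 2))) M ∧ M.card = k), wK2 c M

/-- `S_M`: the set of vertices `v ∈ V` such that `(v, 1)` (the first copy, labelled `0` here)
is covered by a copy-1 edge of `M`, i.e. the set of vertices matched by `M` within the first
copy of `G`. -/
noncomputable def copyOneCovered {V : Type*} [Fintype V]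
    (M : Finset (Sym2 (V × Fin 2))) : Finset V :=
  Finset.univ.filter fun v =>
    ∃ e ∈ M, (v, (0 : Fin 2)) ∈ e ∧ (Sym2.map Prod.snd e).IsDiag

/-!
Split a perfect matching `M` of `G □ K₂` into its two layers: the edges of `G` that `M` uses
in copy `1` and those it uses in copy `2`. Every vertex `v` is covered either by the rung at
`v` or by a copy edge in both copies, so both layers are perfect matchings of `G[S_M]`, and
conversely two perfect matchings of `G[S]` together with the rungs outside `S` form a perfect
matching of `G □ K₂`. Each such matching has `|S|/2 + |S|/2` copy edges, so the fibre over `S`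
carries total weight `c^{2|S|} PM(S)²`, and summing over `S` gives `Z_n`.
-/

open Finset

section Matchings

variable {α : Type*} {G : SimpleGraph α} {M : Finset (Sym2 α)}

theorem IsMatchingSet.eq_of_mem (hM : IsMatchingSet G M) {e f : Sym2 α} (he : e ∈ M)
    (hf : f ∈ M) {v : α} (hve : v ∈ e) (hvf : v ∈ f) : e = f :=
  by_contra fun hne => hM.2 e he f hf hne v hve hvf

theorem isMatchingSet_of_eq_of_mem (hG : ∀ e ∈ M, e ∈ G.edgeSet)
    (hM : ∀ e ∈ M, ∀ f ∈ M, ∀ v, v ∈ e → v ∈ f → e = f) : IsMatchingSet G M :=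
  ⟨hG, fun e he f hf hne v hve hvf => hne (hM e he f hf v hve hvf)⟩

variable [Fintype α]

@[simp]
theorem mem_coveredBy {v : α} : v ∈ coveredBy M ↔ ∃ e ∈ M, v ∈ e := by
  simp [coveredBy]

theorem IsMatchingSet.card_coveredBy (hM : IsMatchingSet G M) : #(coveredBy M) = 2 * #M := by
  have hcov : coveredBy M = M.biUnion Sym2.toFinset := by ext; simp
  rw [hcov, card_biUnion, sum_congr rfl fun e he =>
    Sym2.card_toFinset_of_not_isDiag e (G.not_isDiag_of_mem_edgeSet (hM.1 e he))]
  · simp [mul_comm]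
  · intro e he f hf hne
    simp only [Function.onFun, disjoint_left, Sym2.mem_toFinset]
    exact hM.2 e he f hf hne

variable (G) in
noncomputable def matchingsCovering (S : Finset α) : Finset (Finset (Sym2 α)) :=
  univ.filter fun M => IsMatchingSet G M ∧ coveredBy M = S

@[simp]
theorem mem_matchingsCovering {S : Finset α} :
    M ∈ matchingsCovering G S ↔ IsMatchingSet G M ∧ coveredBy M = S :=
  mem_filter_univ M

theorem PMcount_eq_card_matchingsCovering (S : Finset α) :
    PMcount G S = #(matchingsCovering G S) := rfl

end Matchings

namespace Prism

variable {V : Type*}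

def copyEdge (i : Fin 2) (f : Sym2 V) : Sym2 (V × Fin 2) := f.map (·, i)

def rung (v : V) : Sym2 (V × Fin 2) := s((v, 0), (v, 1))

@[simp]
theorem mem_copyEdge {i : Fin 2} {f : Sym2 V} {x : V × Fin 2} :
    x ∈ copyEdge i f ↔ x.1 ∈ f ∧ x.2 = i := by
  obtain ⟨a, j⟩ := x
  simp only [copyEdge, Sym2.mem_map, Prod.mk.injEq]
  constructor
  · rintro ⟨b, hb, rfl, rfl⟩; exact ⟨hb, rfl⟩
  · rintro ⟨ha, rfl⟩; exact ⟨a, ha, rfl, rfl⟩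

@[simp]
theorem mem_rung {v : V} {x : V × Fin 2} : x ∈ rung v ↔ x.1 = v := by
  obtain ⟨a, j⟩ := x
  fin_cases j <;> simp [rung]

theorem copyEdge_injective (i : Fin 2) : Function.Injective (copyEdge (V := V) i) :=
  Sym2.map.injective fun _ _ h => (Prod.mk.inj h).1

theorem copyEdge_eq_copyEdge_iff {i j : Fin 2} {f f' : Sym2 V} :
    copyEdge i f = copyEdge j f' ↔ i = j ∧ f = f' := by
  refine ⟨fun h => ?_, fun ⟨hij, hf⟩ => hij ▸ hf ▸ rfl⟩
  have hmem : ((f.out.1, i) : V × Fin 2) ∈ copyEdge j f' :=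
    h ▸ mem_copyEdge.2 ⟨f.out_fst_mem, rfl⟩
  obtain rfl : i = j := (mem_copyEdge.1 hmem).2
  exact ⟨rfl, copyEdge_injective i h⟩

theorem isDiag_map_snd_copyEdge (i : Fin 2) (f : Sym2 V) :
    (Sym2.map Prod.snd (copyEdge i f)).IsDiag := by
  induction f using Sym2.inductionOn with
  | hf a b => simp [copyEdge]

theorem not_isDiag_map_snd_rung (v : V) : ¬ (Sym2.map Prod.snd (rung v)).IsDiag := by
  simp [rung]

theorem copyEdge_ne_rung (i : Fin 2) (f : Sym2 V) (v : V) : copyEdge i f ≠ rung v :=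
  fun h => not_isDiag_map_snd_rung v (h ▸ isDiag_map_snd_copyEdge i f)

variable {G : SimpleGraph V}

theorem copyEdge_mem_edgeSet_iff {i : Fin 2} {f : Sym2 V} :
    copyEdge i f ∈ (G □ ⊤).edgeSet ↔ f ∈ G.edgeSet := by
  induction f using Sym2.inductionOn with
  | hf a b => simp [copyEdge, SimpleGraph.boxProd_adj]

theorem rung_mem_edgeSet (v : V) : rung v ∈ (G □ ⊤).edgeSet := by
  simp [rung, SimpleGraph.boxProd_adj]

theorem mem_edgeSet_boxProd_top_iff {e : Sym2 (V × Fin 2)} :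
    e ∈ (G □ ⊤).edgeSet ↔
      (∃ i, ∃ f ∈ G.edgeSet, copyEdge i f = e) ∨ ∃ v, rung v = e := by
  refine ⟨fun he => ?_, ?_⟩
  · induction e using Sym2.inductionOn with
    | hf x y =>
      obtain ⟨a, i⟩ := x
      obtain ⟨b, j⟩ := y
      rcases he with ⟨hab, hij⟩ | ⟨hij, hab⟩
      · obtain rfl : i = j := hij
        exact Or.inl ⟨i, s(a, b), hab, rfl⟩
      · obtain rfl : a = b := hab
        refine Or.inr ⟨a, ?_⟩
        fin_cases i <;> fin_cases j <;> simp_all [rung, Sym2.eq_swap]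
  · rintro (⟨i, f, hf, rfl⟩ | ⟨v, rfl⟩)
    · exact copyEdge_mem_edgeSet_iff.2 hf
    · exact rung_mem_edgeSet v

variable [Fintype V]

noncomputable def layer (i : Fin 2) (M : Finset (Sym2 (V × Fin 2))) : Finset (Sym2 V) :=
  univ.filter fun f => copyEdge i f ∈ M

@[simp]
theorem mem_layer {i : Fin 2} {M : Finset (Sym2 (V × Fin 2))} {f : Sym2 V} :
    f ∈ layer i M ↔ copyEdge i f ∈ M := by
  simp [layer]

noncomputable def ofLayers (L : Fin 2 → Finset (Sym2 V)) : Finset (Sym2 (V × Fin 2)) :=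
  (univ.biUnion fun i => (L i).image (copyEdge i)) ∪ (coveredBy (L 0))ᶜ.image rung

theorem mem_ofLayers {L : Fin 2 → Finset (Sym2 V)} {e : Sym2 (V × Fin 2)} :
    e ∈ ofLayers L ↔
      (∃ i, ∃ f ∈ L i, copyEdge i f = e) ∨ ∃ v ∉ coveredBy (L 0), rung v = e := by
  simp only [ofLayers, mem_union, mem_biUnion, mem_image, mem_univ, true_and, mem_compl]

theorem layer_ofLayers (L : Fin 2 → Finset (Sym2 V)) (i : Fin 2) :
    layer i (ofLayers L) = L i := by
  ext f
  simp only [mem_layer, mem_ofLayers, copyEdge_eq_copyEdge_iff]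
  constructor
  · rintro (⟨j, f', hf', rfl, rfl⟩ | ⟨v, -, h⟩)
    · exact hf'
    · exact absurd h.symm (copyEdge_ne_rung i f v)
  · exact fun hf => Or.inl ⟨i, f, hf, rfl, rfl⟩

section Layers

variable {M : Finset (Sym2 (V × Fin 2))}

theorem isMatchingSet_layer (hM : IsMatchingSet (G □ ⊤) M) (i : Fin 2) :
    IsMatchingSet G (layer i M) := by
  refine isMatchingSet_of_eq_of_mem (fun f hf => ?_) fun f hf f' hf' v hv hv' => ?_
  · exact copyEdge_mem_edgeSet_iff.1 (hM.1 _ (mem_layer.1 hf))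
  · exact (copyEdge_eq_copyEdge_iff.1 (hM.eq_of_mem (mem_layer.1 hf) (mem_layer.1 hf')
      (mem_copyEdge.2 ⟨hv, rfl⟩ : (v, i) ∈ _) (mem_copyEdge.2 ⟨hv', rfl⟩))).2

theorem copyOneCovered_eq_coveredBy_layer_zero (hM : ∀ e ∈ M, e ∈ (G □ ⊤).edgeSet) :
    copyOneCovered M = coveredBy (layer 0 M) := by
  ext v
  simp only [copyOneCovered, mem_filter_univ, mem_coveredBy, mem_layer]
  constructor
  · rintro ⟨e, he, hve, hdiag⟩
    obtain ⟨i, f, -, rfl⟩ | ⟨u, rfl⟩ := mem_edgeSet_boxProd_top_iff.1 (hM e he)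
    · obtain ⟨hv, rfl⟩ := mem_copyEdge.1 hve
      exact ⟨f, he, hv⟩
    · exact absurd hdiag (not_isDiag_map_snd_rung u)
  · rintro ⟨f, hf, hv⟩
    exact ⟨copyEdge 0 f, hf, mem_copyEdge.2 ⟨hv, rfl⟩, isDiag_map_snd_copyEdge 0 f⟩

section Perfect

variable (hM : IsMatchingSet (G □ ⊤) M) (hcov : coveredBy M = univ)
include hM hcov

theorem mem_coveredBy_layer_iff {i : Fin 2} {v : V} :
    v ∈ coveredBy (layer i M) ↔ rung v ∉ M := by
  simp only [mem_coveredBy, mem_layer]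
  constructor
  · rintro ⟨f, hf, hv⟩ hr
    exact copyEdge_ne_rung i f v (hM.eq_of_mem hf hr
      (mem_copyEdge.2 ⟨hv, rfl⟩ : (v, i) ∈ _) (mem_rung.2 rfl))
  · intro hr
    obtain ⟨e, he, hve⟩ := mem_coveredBy.1 (hcov ▸ mem_univ _ : (v, i) ∈ coveredBy M)
    obtain ⟨j, f, -, rfl⟩ | ⟨u, rfl⟩ := mem_edgeSet_boxProd_top_iff.1 (hM.1 e he)
    · obtain ⟨hv, rfl⟩ := mem_copyEdge.1 hve
      exact ⟨f, he, hv⟩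
    · obtain rfl : v = u := mem_rung.1 hve
      exact absurd he hr

theorem coveredBy_layer_eq_coveredBy_layer_zero (i : Fin 2) :
    coveredBy (layer i M) = coveredBy (layer 0 M) := by
  ext v
  rw [mem_coveredBy_layer_iff hM hcov, mem_coveredBy_layer_iff hM hcov]

theorem ofLayers_layer : ofLayers (layer · M) = M := by
  ext e
  rw [mem_ofLayers]
  constructor
  · rintro (⟨i, f, hf, rfl⟩ | ⟨v, hv, rfl⟩)
    · exact mem_layer.1 hf
    · exact not_not.1 ((mem_coveredBy_layer_iff hM hcov).not.1 hv)
  · intro he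
    obtain ⟨i, f, -, rfl⟩ | ⟨v, rfl⟩ := mem_edgeSet_boxProd_top_iff.1 (hM.1 e he)
    · exact Or.inl ⟨i, f, mem_layer.2 he, rfl⟩
    · exact Or.inr ⟨v, fun hv => (mem_coveredBy_layer_iff hM hcov).1 hv he, rfl⟩

end Perfect

end Layers

theorem card_filter_ofLayers (L : Fin 2 → Finset (Sym2 V)) :
    #((ofLayers L).filter fun e => (Sym2.map Prod.snd e).IsDiag) = #(L 0) + #(L 1) := by
  have hcopy : (ofLayers L).filter (fun e => (Sym2.map Prod.snd e).IsDiag)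
      = univ.biUnion fun i => (L i).image (copyEdge i) := by
    ext e
    simp only [mem_filter, mem_ofLayers, mem_biUnion, mem_image, mem_univ, true_and]
    constructor
    · rintro ⟨h | ⟨v, -, rfl⟩, hdiag⟩
      · exact h
      · exact absurd hdiag (not_isDiag_map_snd_rung v)
    · rintro ⟨i, f, hf, rfl⟩
      exact ⟨Or.inl ⟨i, f, hf, rfl⟩, isDiag_map_snd_copyEdge i f⟩
  rw [hcopy, card_biUnion ?_, Fin.sum_univ_two, card_image_of_injective _ (copyEdge_injective 0),
    card_image_of_injective _ (copyEdge_injective 1)]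
  intro i _ j _ hij
  simp only [Function.onFun, disjoint_left, mem_image]
  rintro _ ⟨f, -, rfl⟩ ⟨f', -, h⟩
  exact hij (copyEdge_eq_copyEdge_iff.1 h).1.symm

section Assemble

variable {S : Finset V} {L : Fin 2 → Finset (Sym2 V)}
  (hL : ∀ i, IsMatchingSet G (L i) ∧ coveredBy (L i) = S)
include hL

theorem isMatchingSet_ofLayers : IsMatchingSet (G □ ⊤) (ofLayers L) := by
  have mem_S {i : Fin 2} {f : Sym2 V} (hf : f ∈ L i) {v : V} (hv : v ∈ f) :
      v ∈ coveredBy (L 0) :=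
    (hL 0).2 ▸ (hL i).2 ▸ mem_coveredBy.2 ⟨f, hf, hv⟩
  refine isMatchingSet_of_eq_of_mem (fun e he => ?_) fun e he e' he' x hx hx' => ?_
  · obtain ⟨i, f, hf, rfl⟩ | ⟨v, -, rfl⟩ := mem_ofLayers.1 he
    · exact copyEdge_mem_edgeSet_iff.2 ((hL i).1.1 f hf)
    · exact rung_mem_edgeSet v
  obtain ⟨i, f, hf, rfl⟩ | ⟨v, hv, rfl⟩ := mem_ofLayers.1 he <;>
    obtain ⟨j, f', hf', rfl⟩ | ⟨v', hv', rfl⟩ := mem_ofLayers.1 he'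
  · obtain ⟨hxf, rfl⟩ := mem_copyEdge.1 hx
    obtain ⟨hxf', rfl⟩ := mem_copyEdge.1 hx'
    rw [(hL x.2).1.eq_of_mem hf hf' hxf hxf']
  · exact absurd (mem_rung.1 hx' ▸ mem_S hf (mem_copyEdge.1 hx).1) hv'
  · exact absurd (mem_rung.1 hx ▸ mem_S hf' (mem_copyEdge.1 hx').1) hv
  · rw [← mem_rung.1 hx, mem_rung.1 hx']

theorem coveredBy_ofLayers : coveredBy (ofLayers L) = univ := by
  refine eq_univ_of_forall fun ⟨v, i⟩ => mem_coveredBy.2 ?_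
  by_cases hv : v ∈ coveredBy (L i)
  · obtain ⟨f, hf, hvf⟩ := mem_coveredBy.1 hv
    exact ⟨copyEdge i f, mem_ofLayers.2 (Or.inl ⟨i, f, hf, rfl⟩), mem_copyEdge.2 ⟨hvf, rfl⟩⟩
  · rw [(hL i).2, ← (hL 0).2] at hv
    exact ⟨rung v, mem_ofLayers.2 (Or.inr ⟨v, hv, rfl⟩), mem_rung.2 rfl⟩

theorem copyOneCovered_ofLayers : copyOneCovered (ofLayers L) = S := by
  rw [copyOneCovered_eq_coveredBy_layer_zero (isMatchingSet_ofLayers hL).1, layer_ofLayers,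
    (hL 0).2]

theorem wK2_ofLayers (c : ℝ) : wK2 c (ofLayers L) = c ^ (2 * #S) := by
  have hhalf (i : Fin 2) : #S = 2 * #(L i) := (hL i).2 ▸ (hL i).1.card_coveredBy
  have h0 := hhalf 0
  have h1 := hhalf 1
  rw [wK2, card_filter_ofLayers]
  congr 1
  omega

end Assemble

theorem sum_wK2_copyOneCovered_eq_sum_ofLayers (G : SimpleGraph V) (c : ℝ) (S : Finset V) :
    ∑ M ∈ univ.filter (fun M : Finset (Sym2 (V × Fin 2)) =>
        (IsMatchingSet (G □ ⊤) M ∧ coveredBy M = univ) ∧ copyOneCovered M = S), wK2 c M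
      = ∑ L ∈ Fintype.piFinset fun _ => matchingsCovering G S, wK2 c (ofLayers L) := by
  refine (sum_nbij' ofLayers (fun M i => layer i M) (fun L hL => ?_) (fun M hM => ?_)
    (fun L _ => funext (layer_ofLayers L)) (fun M hM => ?_) fun _ _ => rfl).symm
  · simp only [Fintype.mem_piFinset, mem_matchingsCovering, mem_filter_univ] at hL ⊢
    exact ⟨⟨isMatchingSet_ofLayers hL, coveredBy_ofLayers hL⟩, copyOneCovered_ofLayers hL⟩
  · obtain ⟨⟨hmatch, hcov⟩, rfl⟩ := (mem_filter_univ M).1 hM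
    simp only [Fintype.mem_piFinset, mem_matchingsCovering]
    refine fun i => ⟨isMatchingSet_layer hmatch i, ?_⟩
    rw [coveredBy_layer_eq_coveredBy_layer_zero hmatch hcov i,
      copyOneCovered_eq_coveredBy_layer_zero hmatch.1]
  · obtain ⟨⟨hmatch, hcov⟩, -⟩ := (mem_filter_univ M).1 hM
    exact ofLayers_layer hmatch hcov

theorem sum_wK2_copyOneCovered_eq (G : SimpleGraph V) (c : ℝ) (S : Finset V) :
    ∑ M ∈ univ.filter (fun M : Finset (Sym2 (V × Fin 2)) =>
        (IsMatchingSet (G □ ⊤) M ∧ coveredBy M = univ) ∧ copyOneCovered M = S), wK2 c M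
      = c ^ (2 * #S) * (PMcount G S : ℝ) ^ 2 := by
  have hweight : ∀ L ∈ Fintype.piFinset fun _ : Fin 2 => matchingsCovering G S,
      wK2 c (ofLayers L) = c ^ (2 * #S) := fun L hL =>
    wK2_ofLayers (G := G) (fun i => mem_matchingsCovering.1 (Fintype.mem_piFinset.1 hL i)) c
  rw [sum_wK2_copyOneCovered_eq_sum_ofLayers, sum_congr rfl hweight, sum_const,
    Fintype.card_piFinset, prod_const, card_univ, Fintype.card_fin, nsmul_eq_mul,
    PMcount_eq_card_matchingsCovering]
  push_cast
  ring

theorem card_eq_iff_coveredBy_eq_univ {M : Finset (Sym2 (V × Fin 2))}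
    (hM : IsMatchingSet (G □ ⊤) M) : #M = Fintype.card V ↔ coveredBy M = univ := by
  rw [← card_eq_iff_eq_univ, hM.card_coveredBy, Fintype.card_prod, Fintype.card_fin]
  omega

theorem Zk_card_eq_sum (G : SimpleGraph V) (c : ℝ) :
    Zk G c (Fintype.card V)
      = ∑ T ∈ (univ : Finset V).powerset, c ^ (2 * #T) * (PMcount G T : ℝ) ^ 2 := by
  have hperfect : univ.filter (fun M : Finset (Sym2 (V × Fin 2)) =>
        IsMatchingSet (G □ ⊤) M ∧ #M = Fintype.card V)
      = univ.filter fun M => IsMatchingSet (G □ ⊤) M ∧ coveredBy M = univ :=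
    filter_congr fun M _ => and_congr_right card_eq_iff_coveredBy_eq_univ
  rw [Zk, hperfect, ← sum_fiberwise_of_maps_to (g := copyOneCovered)
    (fun M _ => mem_powerset.2 (subset_univ _))]
  refine sum_congr rfl fun T _ => ?_
  rw [filter_filter, sum_wK2_copyOneCovered_eq]

end Prism

theorem stmt2_general {V : Type*} [Fintype V] (G : SimpleGraph V) (c : ℝ)
    (S : Finset V) :
    (∑ M ∈ Finset.univ.filter (fun M : Finset (Sym2 (V × Fin 2)) =>
        (IsMatchingSet (G.boxProd (⊤ : SimpleGraph (Fin 2))) M ∧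
          coveredBy M = Finset.univ) ∧ copyOneCovered M = S), wK2 c M)
      / Zk G c (Fintype.card V)
    = c ^ (2 * S.card) * (PMcount G S : ℝ) ^ 2 /
        ∑ T ∈ (Finset.univ : Finset V).powerset,
          c ^ (2 * T.card) * (PMcount G T : ℝ) ^ 2 := by
  rw [Prism.sum_wK2_copyOneCovered_eq, Prism.Zk_card_eq_sum]

/-- Let `μ` be the distribution on perfect matchings of `G □ K₂` with `μ(M) = w(M)/Z_n`.
For every `S ⊆ V`, the `μ`-probability that the vertex set covered by the copy-1 edges of
`M` equals `S × {1}` is exactly `c^{2|S|}·PM(S)² / Σ_{T⊆V} c^{2|T|}·PM(T)²`: the pushforward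
of `μ` under `M ↦ S_M` is the distribution `μ_{GBS,G}(S) ∝ c^{2|S|}·PM(S)²`. -/
theorem stmt2 {V : Type*} [Fintype V] (G : SimpleGraph V) (c : ℝ) (hc : 0 < c)
    (S : Finset V) :
    (∑ M ∈ Finset.univ.filter (fun M : Finset (Sym2 (V × Fin 2)) =>
        (IsMatchingSet (G.boxProd (⊤ : SimpleGraph (Fin 2))) M ∧
          coveredBy M = Finset.univ) ∧ copyOneCovered M = S), wK2 c M)
      / Zk G c (Fintype.card V)
    = c ^ (2 * S.card) * (PMcount G S : ℝ) ^ 2 /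
        ∑ T ∈ (Finset.univ : Finset V).powerset,
          c ^ (2 * T.card) * (PMcount G T : ℝ) ^ 2 :=
  stmt2_general G c S
end

section
/- For every finite simple graph G with n=|V|≥1 and every c>0, the total weight of near-perfect matchings of G□K₂ is strictly less than 2n² times the total weight of perfect matchings of G□K₂; that is, Z_{n-1} < 2n²·Z_n. -/
open scoped Classical
set_option linter.unusedSectionVars false
set_option linter.unusedVariables false

namespace Stmt3Proof
open Finset

variable {V : Type*}

def rungE (v : V) : Sym2 (V × Fin 2) := s((v,0),(v,1))
def liftE (i : Fin 2) (e : Sym2 V) : Sym2 (V × Fin 2) := Sym2.map (fun a => (a,i)) e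
def inLayer (i : Fin 2) (e : Sym2 (V × Fin 2)) : Prop := ∀ x ∈ e, x.2 = i

lemma sym2_exists_mem (e : Sym2 V) : ∃ a, a ∈ e := by
  induction e using Sym2.ind with
  | _ x y => exact ⟨x, Sym2.mem_mk_left x y⟩

lemma mem_rungE {x : V × Fin 2} {v : V} : x ∈ rungE v ↔ x = (v,0) ∨ x = (v,1) := by
  simp [rungE, Sym2.mem_iff]

lemma rungE_inj : Function.Injective (rungE (V := V)) := by
  intro a b h
  have : (a, (0:Fin 2)) ∈ rungE b := by rw [← h]; simp [mem_rungE]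
  rcases mem_rungE.1 this with h' | h' <;> exact (Prod.ext_iff.1 h').1

lemma mem_liftE {x : V × Fin 2} {i : Fin 2} {e : Sym2 V} :
    x ∈ liftE i e ↔ ∃ a ∈ e, x = (a,i) := by
  simp only [liftE, Sym2.mem_map]
  constructor
  · rintro ⟨a, ha, rfl⟩; exact ⟨a, ha, rfl⟩
  · rintro ⟨a, ha, rfl⟩; exact ⟨a, ha, rfl⟩

lemma fst_liftE (i : Fin 2) (e : Sym2 V) : Sym2.map Prod.fst (liftE i e) = e := by
  rw [liftE, Sym2.map_map]
  exact congrFun (congrArg Sym2.map rfl) e |>.trans (by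
    have : (Prod.fst ∘ fun a : V => (a, i)) = id := rfl
    rw [this, Sym2.map_id, id_eq])

lemma liftE_inj (i : Fin 2) : Function.Injective (liftE (V := V) i) := by
  intro e f h
  have := congrArg (Sym2.map Prod.fst) h
  rwa [fst_liftE, fst_liftE] at this

lemma inLayer_liftE (i : Fin 2) (e : Sym2 V) : inLayer i (liftE i e) := by
  intro x hx
  rcases mem_liftE.1 hx with ⟨a, _, rfl⟩; rfl

lemma liftE_of_inLayer {i : Fin 2} {e : Sym2 (V × Fin 2)} (h : inLayer i e) :
    liftE i (Sym2.map Prod.fst e) = e := by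
  induction e using Sym2.ind with
  | _ x y =>
    have hx : x.2 = i := h x (Sym2.mem_mk_left x y)
    have hy : y.2 = i := h y (Sym2.mem_mk_right x y)
    rw [Sym2.map_pair_eq, liftE, Sym2.map_pair_eq]
    have e1 : (x.1, i) = x := Prod.ext rfl hx.symm
    have e2 : (y.1, i) = y := Prod.ext rfl hy.symm
    rw [e1, e2]

lemma not_inLayer_rungE (i : Fin 2) (v : V) : ¬ inLayer i (rungE v) := by
  intro h
  have h0 := h (v,0) (by simp [mem_rungE])
  have h1 := h (v,1) (by simp [mem_rungE])
  simp at h0 h1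
  rw [← h0] at h1; exact absurd h1 (by decide)

lemma not_inLayer_liftE {i j : Fin 2} (hij : i ≠ j) (e : Sym2 V) :
    ¬ inLayer i (liftE j e) := by
  intro h
  obtain ⟨a, ha⟩ := sym2_exists_mem e
  have := h (a, j) (mem_liftE.2 ⟨a, ha, rfl⟩)
  exact hij (by simpa using this.symm)

lemma snd_diag_iff (e : Sym2 (V × Fin 2)) :
    (Sym2.map Prod.snd e).IsDiag ↔ ∃ i, inLayer i e := by
  induction e using Sym2.ind with
  | _ x y =>
    rw [Sym2.map_pair_eq, Sym2.mk_isDiag_iff]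
    constructor
    · intro h
      refine ⟨x.2, fun z hz => ?_⟩
      rcases Sym2.mem_iff.1 hz with rfl | rfl
      · rfl
      · exact h.symm
    · rintro ⟨i, hi⟩
      rw [hi x (Sym2.mem_mk_left x y), hi y (Sym2.mem_mk_right x y)]


variable [Fintype V]

noncomputable def suppF (L : Finset (Sym2 V)) : Finset V := Finset.univ.filter (fun v => ∃ e ∈ L, v ∈ e)

lemma mem_suppF {L : Finset (Sym2 V)} {v : V} : v ∈ suppF L ↔ ∃ e ∈ L, v ∈ e := by
  simp [suppF]

lemma card_filter_mem_of_edge {G : SimpleGraph V} {e : Sym2 V} (he : e ∈ G.edgeSet) :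
    (Finset.univ.filter (fun v => v ∈ e)).card = 2 := by
  induction e using Sym2.ind with
  | _ x y =>
    have hxy : x ≠ y := G.ne_of_adj he
    have : (Finset.univ.filter (fun v => v ∈ s(x,y))) = {x, y} := by
      ext v; simp [Sym2.mem_iff]
    rw [this, Finset.card_pair hxy]

lemma card_suppF {G : SimpleGraph V} {L : Finset (Sym2 V)} (hL : IsMatchingSet G L) :
    (suppF L).card = 2 * L.card := by
  have : suppF L = L.biUnion (fun e => Finset.univ.filter (fun v => v ∈ e)) := by
    ext v; simp [suppF]
  rw [this, Finset.card_biUnion, Finset.sum_congr rfl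
    (fun e he => card_filter_mem_of_edge (hL.1 e he))]
  · rw [Finset.sum_const, smul_eq_mul, mul_comm]
  · intro e he f hf hef
    simp only [Finset.disjoint_filter]
    intro v _ hv
    exact hL.2 e he f hf hef v hv

noncomputable def AV (G : SimpleGraph V) (S : Finset V) : Finset (Finset (Sym2 V)) :=
  Finset.univ.filter (fun L => IsMatchingSet G L ∧ ∀ e ∈ L, ∀ v ∈ e, v ∉ S)

lemma mem_AV {G : SimpleGraph V} {S : Finset V} {L : Finset (Sym2 V)} :
    L ∈ AV G S ↔ IsMatchingSet G L ∧ ∀ e ∈ L, ∀ v ∈ e, v ∉ S := by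
  simp [AV]

lemma suppF_subset_compl {G : SimpleGraph V} {S : Finset V} {L : Finset (Sym2 V)}
    (h : L ∈ AV G S) : suppF L ⊆ Sᶜ := by
  intro v hv
  rcases mem_suppF.1 hv with ⟨e, he, hve⟩
  exact Finset.mem_compl.2 ((mem_AV.1 h).2 e he v hve)

lemma two_card_le {G : SimpleGraph V} {S : Finset V} {L : Finset (Sym2 V)}
    (h : L ∈ AV G S) : 2 * L.card ≤ Sᶜ.card := by
  rw [← card_suppF (mem_AV.1 h).1]
  exact Finset.card_le_card (suppF_subset_compl h)

noncomputable def Md (G : SimpleGraph V) (c : ℝ) (S : Finset V) (d : ℕ) : ℝ :=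
  ∑ L ∈ (AV G S).filter (fun L => Sᶜ.card = 2 * L.card + d), c ^ (2 * L.card)

lemma Md_nonneg {G : SimpleGraph V} {c : ℝ} (hc : 0 < c) (S : Finset V) (d : ℕ) :
    0 ≤ Md G c S d :=
  Finset.sum_nonneg (fun _ _ => pow_nonneg hc.le _)


section Boxed
variable (G : SimpleGraph V)

local notation "HG" => G.boxProd (⊤ : SimpleGraph (Fin 2))

lemma rungE_mem_edgeSet (v : V) : rungE v ∈ (HG).edgeSet := by
  rw [rungE, SimpleGraph.mem_edgeSet, SimpleGraph.boxProd_adj]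
  right
  exact ⟨by simp [SimpleGraph.top_adj], rfl⟩

lemma liftE_mem_edgeSet {e : Sym2 V} (he : e ∈ G.edgeSet) (i : Fin 2) :
    liftE i e ∈ (HG).edgeSet := by
  induction e using Sym2.ind with
  | _ x y =>
    rw [liftE, Sym2.map_pair_eq, SimpleGraph.mem_edgeSet, SimpleGraph.boxProd_adj]
    exact Or.inl ⟨(SimpleGraph.mem_edgeSet G).1 he, rfl⟩

lemma classify_rung {e : Sym2 (V × Fin 2)} (he : e ∈ (HG).edgeSet)
    (hd : ¬ (Sym2.map Prod.snd e).IsDiag) : ∃ v, e = rungE v := by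
  induction e using Sym2.ind with
  | _ x y =>
    rw [Sym2.map_pair_eq, Sym2.mk_isDiag_iff] at hd
    rw [SimpleGraph.mem_edgeSet, SimpleGraph.boxProd_adj] at he
    rcases he with ⟨_, h2⟩ | ⟨_, h1⟩
    · exact absurd h2 hd
    · refine ⟨x.1, ?_⟩
      have hx : x = (x.1, x.2) := rfl
      have hy : y = (x.1, y.2) := Prod.ext h1.symm rfl
      have h2 : ∀ i : Fin 2, i = 0 ∨ i = 1 := by decide
      rcases h2 x.2 with hx2 | hx2 <;> rcases h2 y.2 with hy2 | hy2
      · exact absurd (hx2.trans hy2.symm) hd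
      · rw [rungE, hx, hy, hx2, hy2]
      · rw [rungE, hx, hy, hx2, hy2]; exact Sym2.eq_swap
      · exact absurd (hx2.trans hy2.symm) hd

lemma proj_mem_edgeSet {e : Sym2 (V × Fin 2)} (he : e ∈ (HG).edgeSet) {i : Fin 2}
    (hi : inLayer i e) : Sym2.map Prod.fst e ∈ G.edgeSet := by
  induction e using Sym2.ind with
  | _ x y =>
    have hx : x.2 = i := hi x (Sym2.mem_mk_left x y)
    have hy : y.2 = i := hi y (Sym2.mem_mk_right x y)
    rw [SimpleGraph.mem_edgeSet, SimpleGraph.boxProd_adj] at he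
    rw [Sym2.map_pair_eq, SimpleGraph.mem_edgeSet]
    rcases he with ⟨h1, _⟩ | ⟨h2, _⟩
    · exact h1
    · rw [hx, hy] at h2
      exact absurd h2 (by simp)

/-- not a rung: `rungE v` is not `snd`-diagonal. -/
lemma rungE_not_diag (v : V) : ¬ (Sym2.map Prod.snd (rungE v)).IsDiag := by
  rw [rungE, Sym2.map_pair_eq, Sym2.mk_isDiag_iff]
  simp

lemma not_inLayer_both {e : Sym2 (V × Fin 2)} (h0 : inLayer 0 e) (h1 : inLayer 1 e) : False := by
  obtain ⟨x, hx⟩ := sym2_exists_mem e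
  have := (h0 x hx).symm.trans (h1 x hx)
  exact absurd this (by decide)

noncomputable def rungs (M : Finset (Sym2 (V × Fin 2))) : Finset V :=
  Finset.univ.filter (fun v => rungE v ∈ M)

noncomputable def proj (i : Fin 2) (M : Finset (Sym2 (V × Fin 2))) : Finset (Sym2 V) :=
  (M.filter (inLayer i)).image (Sym2.map Prod.fst)

noncomputable def Psi (x : Finset V × Finset (Sym2 V) × Finset (Sym2 V)) :
    Finset (Sym2 (V × Fin 2)) :=
  x.1.image rungE ∪ x.2.1.image (liftE 0) ∪ x.2.2.image (liftE 1)

lemma mem_Psi {x : Finset V × Finset (Sym2 V) × Finset (Sym2 V)} {e : Sym2 (V × Fin 2)} :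
    e ∈ Psi x ↔ (∃ v ∈ x.1, e = rungE v) ∨ (∃ f ∈ x.2.1, e = liftE 0 f) ∨
      (∃ f ∈ x.2.2, e = liftE 1 f) := by
  simp only [Psi, Finset.mem_union, Finset.mem_image, or_assoc]
  constructor
  · rintro (⟨v,hv,rfl⟩|⟨f,hf,rfl⟩|⟨f,hf,rfl⟩)
    · exact Or.inl ⟨v, hv, rfl⟩
    · exact Or.inr (Or.inl ⟨f, hf, rfl⟩)
    · exact Or.inr (Or.inr ⟨f, hf, rfl⟩)
  · rintro (⟨v,hv,rfl⟩|⟨f,hf,rfl⟩|⟨f,hf,rfl⟩)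
    · exact Or.inl ⟨v, hv, rfl⟩
    · exact Or.inr (Or.inl ⟨f, hf, rfl⟩)
    · exact Or.inr (Or.inr ⟨f, hf, rfl⟩)


lemma fst_mem_rungE {x : V × Fin 2} {v : V} (h : x ∈ rungE v) : x.1 = v := by
  rcases mem_rungE.1 h with rfl | rfl <;> rfl

lemma mem_liftE' {x : V × Fin 2} {i : Fin 2} {g : Sym2 V} (h : x ∈ liftE i g) :
    x.1 ∈ g ∧ x.2 = i := by
  rcases mem_liftE.1 h with ⟨a, ha, rfl⟩; exact ⟨ha, rfl⟩

lemma mem_liftE_self {a : V} {i : Fin 2} {g : Sym2 V} (h : a ∈ g) : (a, i) ∈ liftE i g :=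
  mem_liftE.2 ⟨a, h, rfl⟩

lemma Psi_matching {x : Finset V × Finset (Sym2 V) × Finset (Sym2 V)}
    (h1 : x.2.1 ∈ AV G x.1) (h2 : x.2.2 ∈ AV G x.1) : IsMatchingSet (HG) (Psi x) := by
  obtain ⟨hm1, ha1⟩ := mem_AV.1 h1
  obtain ⟨hm2, ha2⟩ := mem_AV.1 h2
  constructor
  · intro e he
    rcases mem_Psi.1 he with ⟨v,_,rfl⟩|⟨f,hf,rfl⟩|⟨f,hf,rfl⟩
    · exact rungE_mem_edgeSet G v
    · exact liftE_mem_edgeSet G (hm1.1 f hf) 0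
    · exact liftE_mem_edgeSet G (hm2.1 f hf) 1
  · intro e he f hf hef w hwe hwf
    rcases mem_Psi.1 he with ⟨v,hv,rfl⟩|⟨g,hg,rfl⟩|⟨g,hg,rfl⟩ <;>
      rcases mem_Psi.1 hf with ⟨v',hv',rfl⟩|⟨g',hg',rfl⟩|⟨g',hg',rfl⟩
    · exact hef (congrArg rungE ((fst_mem_rungE hwe).symm.trans (fst_mem_rungE hwf)))
    · exact ha1 g' hg' w.1 (mem_liftE' hwf).1 ((fst_mem_rungE hwe) ▸ hv)
    · exact ha2 g' hg' w.1 (mem_liftE' hwf).1 ((fst_mem_rungE hwe) ▸ hv)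
    · exact ha1 g hg w.1 (mem_liftE' hwe).1 ((fst_mem_rungE hwf) ▸ hv')
    · refine hm1.2 g hg g' hg' (fun hgg' => hef (by rw [hgg'])) w.1 (mem_liftE' hwe).1
        (mem_liftE' hwf).1
    · exact absurd ((mem_liftE' hwe).2.symm.trans (mem_liftE' hwf).2) (by decide)
    · exact ha2 g hg w.1 (mem_liftE' hwe).1 ((fst_mem_rungE hwf) ▸ hv')
    · exact absurd ((mem_liftE' hwe).2.symm.trans (mem_liftE' hwf).2) (by decide)
    · refine hm2.2 g hg g' hg' (fun hgg' => hef (by rw [hgg'])) w.1 (mem_liftE' hwe).1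
        (mem_liftE' hwf).1

lemma disjoint_lift01 (A B : Finset (Sym2 V)) :
    Disjoint (A.image (liftE 0)) (B.image (liftE 1)) := by
  rw [Finset.disjoint_left]
  rintro e he hf
  obtain ⟨g, _, rfl⟩ := Finset.mem_image.1 he
  obtain ⟨g', _, hgg'⟩ := Finset.mem_image.1 hf
  exact not_inLayer_both (inLayer_liftE 0 g) (hgg' ▸ inLayer_liftE 1 g')

lemma disjoint_rung_lift (S : Finset V) (A : Finset (Sym2 V)) (i : Fin 2) :
    Disjoint (S.image rungE) (A.image (liftE i)) := by
  rw [Finset.disjoint_left]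
  rintro e he hf
  obtain ⟨v, _, rfl⟩ := Finset.mem_image.1 he
  obtain ⟨g, _, hg⟩ := Finset.mem_image.1 hf
  exact not_inLayer_rungE i v (hg ▸ inLayer_liftE i g)

lemma card_Psi (x : Finset V × Finset (Sym2 V) × Finset (Sym2 V)) :
    (Psi x).card = x.1.card + x.2.1.card + x.2.2.card := by
  rw [Psi, Finset.card_union_of_disjoint, Finset.card_union_of_disjoint,
    Finset.card_image_of_injective _ rungE_inj, Finset.card_image_of_injective _ (liftE_inj 0),
    Finset.card_image_of_injective _ (liftE_inj 1)]
  · exact disjoint_rung_lift _ _ _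
  · rw [Finset.disjoint_union_left]
    exact ⟨disjoint_rung_lift _ _ _, disjoint_lift01 _ _⟩

lemma Psi_copy_filter (x : Finset V × Finset (Sym2 V) × Finset (Sym2 V)) :
    (Psi x).filter (fun e => (Sym2.map Prod.snd e).IsDiag) =
      x.2.1.image (liftE 0) ∪ x.2.2.image (liftE 1) := by
  ext e
  rw [Finset.mem_filter, Finset.mem_union]
  constructor
  · rintro ⟨he, hd⟩
    rcases mem_Psi.1 he with ⟨v,_,rfl⟩|⟨f,hf,rfl⟩|⟨f,hf,rfl⟩
    · exact absurd hd (rungE_not_diag v)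
    · exact Or.inl (Finset.mem_image.2 ⟨f, hf, rfl⟩)
    · exact Or.inr (Finset.mem_image.2 ⟨f, hf, rfl⟩)
  · intro he
    constructor
    · rcases he with he | he <;> obtain ⟨f, hf, rfl⟩ := Finset.mem_image.1 he
      · exact mem_Psi.2 (Or.inr (Or.inl ⟨f, hf, rfl⟩))
      · exact mem_Psi.2 (Or.inr (Or.inr ⟨f, hf, rfl⟩))
    · rcases he with he | he <;> obtain ⟨f, hf, rfl⟩ := Finset.mem_image.1 he
      · exact (snd_diag_iff _).2 ⟨0, inLayer_liftE 0 f⟩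
      · exact (snd_diag_iff _).2 ⟨1, inLayer_liftE 1 f⟩

lemma wK2_Psi (c : ℝ) (x : Finset V × Finset (Sym2 V) × Finset (Sym2 V)) :
    wK2 c (Psi x) = c ^ (2 * (x.2.1.card + x.2.2.card)) := by
  rw [wK2, Psi_copy_filter, Finset.card_union_of_disjoint (disjoint_lift01 _ _),
    Finset.card_image_of_injective _ (liftE_inj 0), Finset.card_image_of_injective _ (liftE_inj 1)]


lemma mem_layer_of_mem_proj {M : Finset (Sym2 (V × Fin 2))} {i : Fin 2} {f : Sym2 V}
    (hf : f ∈ proj i M) : ∃ e ∈ M, inLayer i e ∧ Sym2.map Prod.fst e = f := by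
  obtain ⟨e, he, rfl⟩ := Finset.mem_image.1 hf
  rw [Finset.mem_filter] at he
  exact ⟨e, he.1, he.2, rfl⟩

lemma pair_mem_of_mem_fst {e : Sym2 (V × Fin 2)} {i : Fin 2} {v : V}
    (hi : inLayer i e) (hv : v ∈ Sym2.map Prod.fst e) : (v, i) ∈ e := by
  obtain ⟨a, ha, rfl⟩ := Sym2.mem_map.1 hv
  have : a = (a.1, i) := Prod.ext rfl (hi a ha)
  rwa [← this]

lemma vi_mem_rungE (v : V) (i : Fin 2) : (v, i) ∈ rungE v := by
  have : ∀ j : Fin 2, j = 0 ∨ j = 1 := by decide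
  rcases this i with rfl | rfl
  · exact mem_rungE.2 (Or.inl rfl)
  · exact mem_rungE.2 (Or.inr rfl)

lemma proj_mem_AV {M : Finset (Sym2 (V × Fin 2))} (hM : IsMatchingSet (HG) M) (i : Fin 2) :
    proj i M ∈ AV G (rungs M) := by
  rw [mem_AV]
  refine ⟨⟨?_, ?_⟩, ?_⟩
  · intro f hf
    obtain ⟨e, he, hiL, rfl⟩ := mem_layer_of_mem_proj hf
    exact proj_mem_edgeSet G (hM.1 e he) hiL
  · intro f hf f' hf' hne v hv hv'
    obtain ⟨e, he, hiL, rfl⟩ := mem_layer_of_mem_proj hf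
    obtain ⟨e', he', hiL', rfl⟩ := mem_layer_of_mem_proj hf'
    have hee' : e ≠ e' := fun h => hne (by rw [h])
    exact hM.2 e he e' he' hee' (v, i) (pair_mem_of_mem_fst hiL hv)
      (pair_mem_of_mem_fst hiL' hv')
  · intro f hf v hv hvS
    obtain ⟨e, he, hiL, rfl⟩ := mem_layer_of_mem_proj hf
    have hrm : rungE v ∈ M := by simpa [rungs] using hvS
    have hne : e ≠ rungE v := fun h => not_inLayer_rungE i v (h ▸ hiL)
    exact hM.2 e he (rungE v) hrm hne (v, i) (pair_mem_of_mem_fst hiL hv) (vi_mem_rungE v i)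

lemma filter_not_diag_eq {M : Finset (Sym2 (V × Fin 2))} (hM : IsMatchingSet (HG) M) :
    M.filter (fun e => ¬ (Sym2.map Prod.snd e).IsDiag) = (rungs M).image rungE := by
  ext e
  rw [Finset.mem_filter, Finset.mem_image]
  constructor
  · rintro ⟨he, hd⟩
    obtain ⟨v, rfl⟩ := classify_rung G (hM.1 e he) hd
    exact ⟨v, by simpa [rungs] using he, rfl⟩
  · rintro ⟨v, hv, rfl⟩
    exact ⟨by simpa [rungs] using hv, rungE_not_diag v⟩

lemma filter_diag_eq (M : Finset (Sym2 (V × Fin 2))) :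
    M.filter (fun e => (Sym2.map Prod.snd e).IsDiag) =
      M.filter (inLayer 0) ∪ M.filter (inLayer 1) := by
  ext e
  rw [Finset.mem_filter, Finset.mem_union, Finset.mem_filter, Finset.mem_filter]
  constructor
  · rintro ⟨he, hd⟩
    obtain ⟨i, hi⟩ := (snd_diag_iff e).1 hd
    have : ∀ j : Fin 2, j = 0 ∨ j = 1 := by decide
    rcases this i with rfl | rfl
    · exact Or.inl ⟨he, hi⟩
    · exact Or.inr ⟨he, hi⟩
  · rintro (⟨he, hi⟩ | ⟨he, hi⟩)
    · exact ⟨he, (snd_diag_iff e).2 ⟨0, hi⟩⟩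
    · exact ⟨he, (snd_diag_iff e).2 ⟨1, hi⟩⟩

lemma disjoint_layers (M : Finset (Sym2 (V × Fin 2))) :
    Disjoint (M.filter (inLayer 0)) (M.filter (inLayer 1)) := by
  rw [Finset.disjoint_left]
  intro e he hf
  exact not_inLayer_both (Finset.mem_filter.1 he).2 (Finset.mem_filter.1 hf).2

lemma card_proj (M : Finset (Sym2 (V × Fin 2))) (i : Fin 2) :
    (proj i M).card = (M.filter (inLayer i)).card := by
  refine Finset.card_image_of_injOn ?_
  intro e he e' he' h
  have hi := (Finset.mem_filter.1 (by exact_mod_cast he)).2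
  have hi' := (Finset.mem_filter.1 (by exact_mod_cast he')).2
  rw [← liftE_of_inLayer hi, ← liftE_of_inLayer hi', h]

lemma card_diag_filter (M : Finset (Sym2 (V × Fin 2))) :
    (M.filter (fun e => (Sym2.map Prod.snd e).IsDiag)).card =
      (proj 0 M).card + (proj 1 M).card := by
  rw [filter_diag_eq, Finset.card_union_of_disjoint (disjoint_layers M), card_proj, card_proj]

lemma wK2_eq_proj (c : ℝ) (M : Finset (Sym2 (V × Fin 2))) :
    wK2 c M = c ^ (2 * ((proj 0 M).card + (proj 1 M).card)) := by
  rw [wK2, card_diag_filter]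

lemma card_M_decomp {M : Finset (Sym2 (V × Fin 2))} (hM : IsMatchingSet (HG) M) :
    M.card = (rungs M).card + (proj 0 M).card + (proj 1 M).card := by
  have h1 := Finset.card_filter_add_card_filter_not
    (s := M) (p := fun e => (Sym2.map Prod.snd e).IsDiag)
  rw [card_diag_filter, filter_not_diag_eq G hM,
    Finset.card_image_of_injective _ rungE_inj] at h1
  omega

lemma Psi_phi {M : Finset (Sym2 (V × Fin 2))} (hM : IsMatchingSet (HG) M) :
    Psi (rungs M, proj 0 M, proj 1 M) = M := by
  ext e
  rw [mem_Psi]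
  constructor
  · rintro (⟨v, hv, rfl⟩ | ⟨f, hf, rfl⟩ | ⟨f, hf, rfl⟩)
    · simpa [rungs] using hv
    · obtain ⟨e', he', hiL, rfl⟩ := mem_layer_of_mem_proj hf
      rwa [liftE_of_inLayer hiL]
    · obtain ⟨e', he', hiL, rfl⟩ := mem_layer_of_mem_proj hf
      rwa [liftE_of_inLayer hiL]
  · intro he
    by_cases hd : (Sym2.map Prod.snd e).IsDiag
    · obtain ⟨i, hi⟩ := (snd_diag_iff e).1 hd
      have h01 : ∀ j : Fin 2, j = 0 ∨ j = 1 := by decide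
      have hmem : Sym2.map Prod.fst e ∈ proj i M :=
        Finset.mem_image.2 ⟨e, Finset.mem_filter.2 ⟨he, hi⟩, rfl⟩
      rcases h01 i with rfl | rfl
      · exact Or.inr (Or.inl ⟨_, hmem, (liftE_of_inLayer hi).symm⟩)
      · exact Or.inr (Or.inr ⟨_, hmem, (liftE_of_inLayer hi).symm⟩)
    · obtain ⟨v, rfl⟩ := classify_rung G (hM.1 e he) hd
      exact Or.inl ⟨v, by simpa [rungs] using he, rfl⟩

lemma phi_Psi {x : Finset V × Finset (Sym2 V) × Finset (Sym2 V)}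
    (h1 : x.2.1 ∈ AV G x.1) (h2 : x.2.2 ∈ AV G x.1) :
    (rungs (Psi x), proj 0 (Psi x), proj 1 (Psi x)) = x := by
  have hr : rungs (Psi x) = x.1 := by
    ext v
    simp only [rungs, Finset.mem_filter, Finset.mem_univ, true_and]
    constructor
    · intro hv
      rcases mem_Psi.1 hv with ⟨v', hv', he⟩ | ⟨f, hf, he⟩ | ⟨f, hf, he⟩
      · rwa [rungE_inj he]
      · exact absurd (he ▸ inLayer_liftE 0 f) (not_inLayer_rungE 0 v)
      · exact absurd (he ▸ inLayer_liftE 1 f) (not_inLayer_rungE 1 v)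
    · intro hv
      exact mem_Psi.2 (Or.inl ⟨v, hv, rfl⟩)
  have hp : ∀ i : Fin 2, ∀ A : Finset (Sym2 V), (∀ f ∈ A, liftE i f ∈ Psi x) →
      (∀ e ∈ Psi x, inLayer i e → Sym2.map Prod.fst e ∈ A) → proj i (Psi x) = A := by
    intro i A hin hout
    ext f
    constructor
    · intro hf
      obtain ⟨e, he, hiL, rfl⟩ := mem_layer_of_mem_proj hf
      exact hout e he hiL
    · intro hf
      exact Finset.mem_image.2 ⟨liftE i f, Finset.mem_filter.2 ⟨hin f hf, inLayer_liftE i f⟩,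
        fst_liftE i f⟩
  have hp0 : proj 0 (Psi x) = x.2.1 := by
    refine hp 0 x.2.1 (fun f hf => mem_Psi.2 (Or.inr (Or.inl ⟨f, hf, rfl⟩))) ?_
    intro e he hiL
    rcases mem_Psi.1 he with ⟨v, hv, rfl⟩ | ⟨f, hf, rfl⟩ | ⟨f, hf, rfl⟩
    · exact absurd hiL (not_inLayer_rungE 0 v)
    · rwa [fst_liftE]
    · exact absurd hiL (not_inLayer_liftE (by decide) f)
  have hp1 : proj 1 (Psi x) = x.2.2 := by
    refine hp 1 x.2.2 (fun f hf => mem_Psi.2 (Or.inr (Or.inr ⟨f, hf, rfl⟩))) ?_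
    intro e he hiL
    rcases mem_Psi.1 he with ⟨v, hv, rfl⟩ | ⟨f, hf, rfl⟩ | ⟨f, hf, rfl⟩
    · exact absurd hiL (not_inLayer_rungE 1 v)
    · exact absurd hiL (not_inLayer_liftE (by decide) f)
    · rwa [fst_liftE]
  rw [hr, hp0, hp1]

noncomputable def TT (k : ℕ) : Finset (Finset V × Finset (Sym2 V) × Finset (Sym2 V)) :=
  Finset.univ.filter (fun x => x.2.1 ∈ AV G x.1 ∧ x.2.2 ∈ AV G x.1 ∧
    x.1.card + x.2.1.card + x.2.2.card = k)

theorem Zk_eq_TT (c : ℝ) (k : ℕ) :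
    Zk G c k = ∑ x ∈ TT G k, c ^ (2 * (x.2.1.card + x.2.2.card)) := by
  rw [Zk]
  refine Finset.sum_nbij' (fun M => (rungs M, proj 0 M, proj 1 M)) Psi ?_ ?_ ?_ ?_ ?_
  · intro M hM
    rw [Finset.mem_filter] at hM
    obtain ⟨_, hmat, hcard⟩ := hM
    rw [TT, Finset.mem_filter]
    exact ⟨Finset.mem_univ _, proj_mem_AV G hmat 0, proj_mem_AV G hmat 1,
      by rw [← card_M_decomp G hmat]; exact hcard⟩
  · intro x hx
    rw [TT, Finset.mem_filter] at hx
    obtain ⟨_, h1, h2, hcard⟩ := hx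
    rw [Finset.mem_filter]
    exact ⟨Finset.mem_univ _, Psi_matching G h1 h2, by rw [card_Psi]; exact hcard⟩
  · intro M hM
    rw [Finset.mem_filter] at hM
    exact Psi_phi G hM.2.1
  · intro x hx
    rw [TT, Finset.mem_filter] at hx
    exact phi_Psi G hx.2.1 hx.2.2.1
  · intro M hM
    exact wK2_eq_proj c M


theorem Zk_eq_nested (c : ℝ) (k : ℕ) :
    Zk G c k = ∑ S : Finset V, ∑ L₁ ∈ AV G S, ∑ L₂ ∈ AV G S,
      (if S.card + L₁.card + L₂.card = k then c ^ (2 * (L₁.card + L₂.card)) else 0) := by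
  rw [Zk_eq_TT G c k, TT, Finset.sum_filter, Fintype.sum_prod_type]
  refine Finset.sum_congr rfl (fun S _ => ?_)
  rw [Fintype.sum_prod_type]
  simp only [ite_and, AV, Finset.sum_filter, Finset.mem_filter, Finset.mem_univ, true_and]
  refine Finset.sum_congr rfl fun L₁ _ => ?_
  by_cases hA : IsMatchingSet G L₁ <;> by_cases hB : (∀ e ∈ L₁, ∀ v ∈ e, v ∉ S) <;>
    simp [hA, hB]

lemma double_filter {α : Type*} (s : Finset α) (p q : α → Prop) [DecidablePred p]
    [DecidablePred q] (f g : α → ℝ) :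
    (∑ a ∈ s.filter p, f a) * (∑ b ∈ s.filter q, g b) =
      ∑ a ∈ s, ∑ b ∈ s, (if p a ∧ q b then f a * g b else 0) := by
  rw [Finset.sum_filter, Finset.sum_filter, Finset.sum_mul_sum]
  refine Finset.sum_congr rfl fun a _ => Finset.sum_congr rfl fun b _ => ?_
  by_cases hp : p a <;> by_cases hq : q b <;> simp [hp, hq]

lemma inner_perfect (c : ℝ) (S : Finset V) :
    (∑ L₁ ∈ AV G S, ∑ L₂ ∈ AV G S,
      (if S.card + L₁.card + L₂.card = Fintype.card V then
        c ^ (2 * (L₁.card + L₂.card)) else 0)) = Md G c S 0 * Md G c S 0 := by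
  rw [Md]
  rw [double_filter (AV G S) (fun L => Sᶜ.card = 2 * L.card + 0)
    (fun L => Sᶜ.card = 2 * L.card + 0)]
  refine Finset.sum_congr rfl fun L₁ h₁ => Finset.sum_congr rfl fun L₂ h₂ => ?_
  have hc1 := two_card_le h₁
  have hc2 := two_card_le h₂
  have hcc := Finset.card_add_card_compl S
  split_ifs with h1 h2 h3
  · rw [mul_add, pow_add]
  · omega
  · omega
  · rfl

lemma inner_near (hn : 1 ≤ Fintype.card V) (c : ℝ) (S : Finset V) :
    (∑ L₁ ∈ AV G S, ∑ L₂ ∈ AV G S,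
      (if S.card + L₁.card + L₂.card = Fintype.card V - 1 then
        c ^ (2 * (L₁.card + L₂.card)) else 0)) =
      Md G c S 1 * Md G c S 1 + Md G c S 0 * Md G c S 2 + Md G c S 2 * Md G c S 0 := by
  rw [Md, Md, Md]
  rw [double_filter (AV G S) (fun L => Sᶜ.card = 2 * L.card + 1) (fun L => Sᶜ.card = 2 * L.card + 1),
    double_filter (AV G S) (fun L => Sᶜ.card = 2 * L.card + 0) (fun L => Sᶜ.card = 2 * L.card + 2),
    double_filter (AV G S) (fun L => Sᶜ.card = 2 * L.card + 2) (fun L => Sᶜ.card = 2 * L.card + 0),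
    ← Finset.sum_add_distrib, ← Finset.sum_add_distrib]
  refine Finset.sum_congr rfl fun L₁ h₁ => ?_
  rw [← Finset.sum_add_distrib, ← Finset.sum_add_distrib]
  refine Finset.sum_congr rfl fun L₂ h₂ => ?_
  have hc1 := two_card_le h₁
  have hc2 := two_card_le h₂
  have hcc := Finset.card_add_card_compl S
  split_ifs <;> first | omega | (rw [mul_add, pow_add]; ring) | ring


lemma AV_insert_filter (S : Finset V) {u : V} (hu : u ∈ Sᶜ) (d : ℕ) :
    (AV G (insert u S)).filter (fun L => (insert u S)ᶜ.card = 2 * L.card + d) =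
      ((AV G S).filter (fun L => Sᶜ.card = 2 * L.card + (d + 1))).filter
        (fun L => u ∉ suppF L) := by
  have huS : u ∉ S := Finset.mem_compl.1 hu
  have hpos : 1 ≤ Sᶜ.card := Finset.card_pos.2 ⟨u, hu⟩
  have hcard : (insert u S)ᶜ.card + 1 = Sᶜ.card := by
    rw [Finset.compl_insert, Finset.card_erase_of_mem hu]
    omega
  ext L
  simp only [Finset.mem_filter, mem_AV]
  constructor
  · rintro ⟨⟨hm, hav⟩, hc⟩
    refine ⟨⟨⟨hm, fun e he v hv hvS => hav e he v hv (Finset.mem_insert_of_mem hvS)⟩, ?_⟩, ?_⟩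
    · omega
    · intro hsupp
      obtain ⟨e, he, hue⟩ := mem_suppF.1 hsupp
      exact hav e he u hue (Finset.mem_insert_self u S)
  · rintro ⟨⟨⟨hm, hav⟩, hc⟩, hsupp⟩
    refine ⟨⟨hm, fun e he v hv hvS => ?_⟩, by omega⟩
    rcases Finset.mem_insert.1 hvS with rfl | hvS'
    · exact hsupp (mem_suppF.2 ⟨e, he, hv⟩)
    · exact hav e he v hv hvS'

lemma stepdown (c : ℝ) (S : Finset V) (d : ℕ) :
    ∑ u ∈ Sᶜ, Md G c (insert u S) d = ((d : ℝ) + 1) * Md G c S (d + 1) := by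
  have h1 : ∀ u ∈ Sᶜ, Md G c (insert u S) d =
      ∑ L ∈ (AV G S).filter (fun L => Sᶜ.card = 2 * L.card + (d + 1)),
        (if u ∉ suppF L then c ^ (2 * L.card) else 0) := by
    intro u hu
    rw [Md, AV_insert_filter G S hu d, Finset.sum_filter]
  rw [Finset.sum_congr rfl h1, Finset.sum_comm, Md, Finset.mul_sum]
  refine Finset.sum_congr rfl fun L hL => ?_
  obtain ⟨hLAV, hLc⟩ := Finset.mem_filter.1 hL
  have hsub : suppF L ⊆ Sᶜ := suppF_subset_compl hLAV
  have hsupp : (suppF L).card = 2 * L.card := card_suppF (mem_AV.1 hLAV).1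
  have hfil : Sᶜ.filter (fun u => u ∉ suppF L) = Sᶜ \ suppF L := by
    ext v; simp [Finset.mem_sdiff]
  have hcard : (Sᶜ \ suppF L).card = d + 1 := by
    rw [Finset.card_sdiff_of_subset hsub]; omega
  rw [Finset.sum_ite, Finset.sum_const_zero, add_zero, Finset.sum_const, hfil, hcard,
    nsmul_eq_mul]
  push_cast
  ring

lemma reindex (φ : Finset V → V → ℝ) :
    ∑ S : Finset V, ∑ u ∈ Sᶜ, φ S u = ∑ T : Finset V, ∑ u ∈ T, φ (T.erase u) u := by
  rw [Finset.sum_sigma' Finset.univ (fun S => Sᶜ) (fun S u => φ S u),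
    Finset.sum_sigma' Finset.univ (fun T => T) (fun T u => φ (T.erase u) u)]
  refine Finset.sum_nbij' (fun x => ⟨insert x.2 x.1, x.2⟩) (fun x => ⟨x.1.erase x.2, x.2⟩)
    ?_ ?_ ?_ ?_ ?_
  · rintro ⟨S, u⟩ hx
    rw [Finset.mem_sigma]
    exact ⟨Finset.mem_univ _, Finset.mem_insert_self u S⟩
  · rintro ⟨T, u⟩ hx
    rw [Finset.mem_sigma]
    exact ⟨Finset.mem_univ _, Finset.mem_compl.2 (Finset.notMem_erase u T)⟩
  · rintro ⟨S, u⟩ hx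
    rw [Finset.mem_sigma] at hx
    have : u ∉ S := Finset.mem_compl.1 hx.2
    simp only [Finset.erase_insert this]
  · rintro ⟨T, u⟩ hx
    rw [Finset.mem_sigma] at hx
    simp only [Finset.insert_erase hx.2]
  · rintro ⟨S, u⟩ hx
    rw [Finset.mem_sigma] at hx
    have : u ∉ S := Finset.mem_compl.1 hx.2
    simp only [Finset.erase_insert this]

end Boxed

section Final
variable (G : SimpleGraph V) (c : ℝ)

lemma Md_univ_zero : Md G c Finset.univ 0 = 1 := by
  rw [Md]
  have h : ((AV G Finset.univ).filter
      (fun L => (Finset.univ : Finset V)ᶜ.card = 2 * L.card + 0)) = {∅} := by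
    ext L
    simp only [Finset.mem_filter, mem_AV, Finset.mem_singleton, Finset.compl_univ,
      Finset.card_empty]
    constructor
    · rintro ⟨_, hc⟩
      exact Finset.card_eq_zero.1 (by omega)
    · rintro rfl
      refine ⟨⟨⟨fun e he => absurd he (Finset.notMem_empty e),
        fun e he => absurd he (Finset.notMem_empty e)⟩,
        fun e he => absurd he (Finset.notMem_empty e)⟩, by simp⟩
  rw [h, Finset.sum_singleton]
  simp

lemma Zn_eq : Zk G c (Fintype.card V) = ∑ S : Finset V, Md G c S 0 ^ 2 := by
  rw [Zk_eq_nested]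
  refine Finset.sum_congr rfl fun S _ => ?_
  rw [inner_perfect, sq]

lemma Zn1_eq (hn : 1 ≤ Fintype.card V) :
    Zk G c (Fintype.card V - 1) =
      ∑ S : Finset V, (Md G c S 1 ^ 2 + 2 * (Md G c S 0 * Md G c S 2)) := by
  rw [Zk_eq_nested]
  refine Finset.sum_congr rfl fun S _ => ?_
  rw [inner_near G hn]
  ring

lemma cardA {T : Finset V} {u : V} (hu : u ∈ T) :
    (T.erase u)ᶜ.card + T.card = Fintype.card V + 1 := by
  have h1 : (T.erase u).card = T.card - 1 := Finset.card_erase_of_mem hu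
  have h2 := Finset.card_add_card_compl (T.erase u)
  have h3 : 1 ≤ T.card := Finset.card_pos.2 ⟨u, hu⟩
  omega

lemma cardA' {T : Finset V} {u : V} (hu : u ∈ T) :
    ((T.erase u)ᶜ.card : ℝ) = (Fintype.card V : ℝ) + 1 - T.card := by
  have := cardA hu
  have h := congrArg (Nat.cast (R := ℝ)) this
  push_cast at h
  linarith

lemma cardB {S : Finset V} {u : V} (hu : u ∈ Sᶜ) :
    ((insert u S)ᶜ.card : ℝ) = (Sᶜ.card : ℝ) - 1 := by
  have h1 : (insert u S)ᶜ.card + 1 = Sᶜ.card := by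
    rw [Finset.compl_insert, Finset.card_erase_of_mem hu]
    have : 1 ≤ Sᶜ.card := Finset.card_pos.2 ⟨u, hu⟩
    omega
  have h := congrArg (Nat.cast (R := ℝ)) h1
  push_cast at h
  linarith

lemma cardC {T : Finset V} {u : V} (hu : u ∈ T) :
    ((T.erase u).card : ℝ) = (T.card : ℝ) - 1 := by
  have h1 : (T.erase u).card + 1 = T.card := by
    rw [Finset.card_erase_of_mem hu]
    have : 1 ≤ T.card := Finset.card_pos.2 ⟨u, hu⟩
    omega
  have h := congrArg (Nat.cast (R := ℝ)) h1
  push_cast at h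
  linarith

lemma cardD (S : Finset V) : (Sᶜ.card : ℝ) = (Fintype.card V : ℝ) - S.card := by
  have h := congrArg (Nat.cast (R := ℝ)) (Finset.card_add_card_compl S)
  push_cast at h
  linarith

theorem main (hn : 1 ≤ Fintype.card V) (hc : 0 < c) :
    Zk G c (Fintype.card V - 1) <
      2 * (Fintype.card V : ℝ) ^ 2 * Zk G c (Fintype.card V) := by
  set n := Fintype.card V with hn_def
  have hF0 : ∀ S : Finset V, ∀ d, 0 ≤ Md G c S d := fun S d => Md_nonneg hc S d
  have hG1 : ∀ S : Finset V, Md G c S 1 = ∑ u ∈ Sᶜ, Md G c (insert u S) 0 := by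
    intro S
    have h := stepdown G c S 0
    rw [h]; norm_num
  have hN2 : ∀ S : Finset V, 2 * Md G c S 2 = ∑ u ∈ Sᶜ, Md G c (insert u S) 1 := by
    intro S
    have h := stepdown G c S 1
    rw [h]; norm_num
  -- Bound the A part
  have hA : ∑ S : Finset V, Md G c S 1 ^ 2 ≤
      ∑ T : Finset V, (T.card : ℝ) * ((n : ℝ) + 1 - T.card) * Md G c T 0 ^ 2 := by
    have step1 : ∀ S : Finset V, Md G c S 1 ^ 2 ≤
        ∑ u ∈ Sᶜ, (Sᶜ.card : ℝ) * Md G c (insert u S) 0 ^ 2 := by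
      intro S
      rw [hG1 S, ← Finset.mul_sum]
      exact sq_sum_le_card_mul_sum_sq
    refine le_trans (Finset.sum_le_sum fun S _ => step1 S) (le_of_eq ?_)
    rw [reindex (fun S u => (Sᶜ.card : ℝ) * Md G c (insert u S) 0 ^ 2)]
    refine Finset.sum_congr rfl fun T _ => ?_
    have : ∀ u ∈ T, ((T.erase u)ᶜ.card : ℝ) * Md G c (insert u (T.erase u)) 0 ^ 2
        = ((n : ℝ) + 1 - T.card) * Md G c T 0 ^ 2 := by
      intro u hu
      rw [Finset.insert_erase hu, cardA' hu]
    rw [Finset.sum_congr rfl this, Finset.sum_const, nsmul_eq_mul]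
    ring
  -- Bound the B part
  have hB : ∑ S : Finset V, 2 * (Md G c S 0 * Md G c S 2) ≤
      (∑ S : Finset V, (((n:ℝ) - S.card) * (((n:ℝ) - S.card) - 1) / 2) * Md G c S 0 ^ 2) +
      ∑ T : Finset V, ((T.card : ℝ) * ((T.card : ℝ) - 1) / 2) * Md G c T 0 ^ 2 := by
    have hexp : ∀ S : Finset V, 2 * (Md G c S 0 * Md G c S 2) =
        ∑ u ∈ Sᶜ, ∑ v ∈ (insert u S)ᶜ, Md G c S 0 * Md G c (insert v (insert u S)) 0 := by
      intro S
      have h1 : 2 * (Md G c S 0 * Md G c S 2) = Md G c S 0 * (2 * Md G c S 2) := by ring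
      rw [h1, hN2 S, Finset.mul_sum]
      refine Finset.sum_congr rfl fun u hu => ?_
      rw [hG1 (insert u S), Finset.mul_sum]
    have hpt : ∀ S : Finset V, ∀ T : Finset V,
        Md G c S 0 * Md G c T 0 ≤ Md G c S 0 ^ 2 / 2 + Md G c T 0 ^ 2 / 2 := by
      intro S T
      nlinarith [sq_nonneg (Md G c S 0 - Md G c T 0)]
    have step : ∑ S : Finset V, 2 * (Md G c S 0 * Md G c S 2) ≤
        ∑ S : Finset V, ∑ u ∈ Sᶜ, ∑ v ∈ (insert u S)ᶜ,
          (Md G c S 0 ^ 2 / 2 + Md G c (insert v (insert u S)) 0 ^ 2 / 2) := by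
      refine Finset.sum_le_sum fun S _ => ?_
      rw [hexp S]
      exact Finset.sum_le_sum fun u _ => Finset.sum_le_sum fun v _ => hpt _ _
    refine le_trans step (le_of_eq ?_)
    have split : ∀ S : Finset V, ∑ u ∈ Sᶜ, ∑ v ∈ (insert u S)ᶜ,
        (Md G c S 0 ^ 2 / 2 + Md G c (insert v (insert u S)) 0 ^ 2 / 2) =
        (∑ u ∈ Sᶜ, ∑ v ∈ (insert u S)ᶜ, Md G c S 0 ^ 2 / 2) +
        ∑ u ∈ Sᶜ, ∑ v ∈ (insert u S)ᶜ, Md G c (insert v (insert u S)) 0 ^ 2 / 2 := by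
      intro S
      rw [← Finset.sum_add_distrib]
      exact Finset.sum_congr rfl fun u _ => by rw [← Finset.sum_add_distrib]
    rw [Finset.sum_congr rfl (fun S _ => split S), Finset.sum_add_distrib]
    congr 1
    · -- B1 part
      refine Finset.sum_congr rfl fun S _ => ?_
      have hv : ∀ u ∈ Sᶜ, ∑ v ∈ (insert u S)ᶜ, Md G c S 0 ^ 2 / 2 =
          ((Sᶜ.card : ℝ) - 1) * (Md G c S 0 ^ 2 / 2) := by
        intro u hu
        rw [Finset.sum_const, nsmul_eq_mul, cardB hu]
      rw [Finset.sum_congr rfl hv, Finset.sum_const, nsmul_eq_mul, cardD S]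
      ring
    · -- B2 part
      rw [reindex (fun S u => ∑ v ∈ (insert u S)ᶜ, Md G c (insert v (insert u S)) 0 ^ 2 / 2)]
      have h2 : ∀ T : Finset V, ∑ u ∈ T,
          (∑ v ∈ (insert u (T.erase u))ᶜ, Md G c (insert v (insert u (T.erase u))) 0 ^ 2 / 2) =
          (T.card : ℝ) * ∑ v ∈ Tᶜ, Md G c (insert v T) 0 ^ 2 / 2 := by
        intro T
        have : ∀ u ∈ T, (∑ v ∈ (insert u (T.erase u))ᶜ,
            Md G c (insert v (insert u (T.erase u))) 0 ^ 2 / 2) =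
            ∑ v ∈ Tᶜ, Md G c (insert v T) 0 ^ 2 / 2 := by
          intro u hu
          rw [Finset.insert_erase hu]
        rw [Finset.sum_congr rfl this, Finset.sum_const, nsmul_eq_mul]
      rw [Finset.sum_congr rfl (fun T _ => h2 T)]
      have h3 : ∀ T : Finset V, (T.card : ℝ) * ∑ v ∈ Tᶜ, Md G c (insert v T) 0 ^ 2 / 2 =
          ∑ v ∈ Tᶜ, (T.card : ℝ) * (Md G c (insert v T) 0 ^ 2 / 2) := by
        intro T
        rw [Finset.mul_sum]
      rw [Finset.sum_congr rfl (fun T _ => h3 T),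
        reindex (fun T v => (T.card : ℝ) * (Md G c (insert v T) 0 ^ 2 / 2))]
      refine Finset.sum_congr rfl fun T _ => ?_
      have : ∀ v ∈ T, ((T.erase v).card : ℝ) * (Md G c (insert v (T.erase v)) 0 ^ 2 / 2) =
          ((T.card : ℝ) - 1) * (Md G c T 0 ^ 2 / 2) := by
        intro v hv
        rw [Finset.insert_erase hv, cardC hv]
      rw [Finset.sum_congr rfl this, Finset.sum_const, nsmul_eq_mul]
      ring
  -- combine
  have hcoef : ∀ T : Finset V,
      (T.card : ℝ) * ((n : ℝ) + 1 - T.card) * Md G c T 0 ^ 2 +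
      ((((n:ℝ) - T.card) * (((n:ℝ) - T.card) - 1) / 2) * Md G c T 0 ^ 2 +
        ((T.card : ℝ) * ((T.card : ℝ) - 1) / 2) * Md G c T 0 ^ 2) ≤
      (((n : ℝ) ^ 2 + n) / 2) * Md G c T 0 ^ 2 := by
    intro T
    have ht0 : (0 : ℝ) ≤ T.card := Nat.cast_nonneg _
    have htn : (T.card : ℝ) ≤ n := by
      exact_mod_cast Finset.card_le_card (Finset.subset_univ T)
    have hsq : 0 ≤ Md G c T 0 ^ 2 := sq_nonneg _
    nlinarith [sq_nonneg ((T.card : ℝ) - n)]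
  have hZ1 : Zk G c (n - 1) ≤ (((n : ℝ) ^ 2 + n) / 2) * ∑ S : Finset V, Md G c S 0 ^ 2 := by
    rw [Zn1_eq G c hn, Finset.sum_add_distrib, Finset.mul_sum]
    calc (∑ S : Finset V, Md G c S 1 ^ 2) + ∑ S : Finset V, 2 * (Md G c S 0 * Md G c S 2)
        ≤ (∑ T : Finset V, (T.card : ℝ) * ((n : ℝ) + 1 - T.card) * Md G c T 0 ^ 2) +
          ((∑ S : Finset V, (((n:ℝ) - S.card) * (((n:ℝ) - S.card) - 1) / 2) * Md G c S 0 ^ 2) +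
          ∑ T : Finset V, ((T.card : ℝ) * ((T.card : ℝ) - 1) / 2) * Md G c T 0 ^ 2) :=
          add_le_add hA hB
      _ ≤ ∑ S : Finset V, (((n : ℝ) ^ 2 + n) / 2) * Md G c S 0 ^ 2 := by
          rw [← Finset.sum_add_distrib, ← Finset.sum_add_distrib]
          exact Finset.sum_le_sum fun T _ => hcoef T
  have hZn1' : (1 : ℝ) ≤ ∑ S : Finset V, Md G c S 0 ^ 2 := by
    have h1 : Md G c (Finset.univ : Finset V) 0 ^ 2 ≤ ∑ S : Finset V, Md G c S 0 ^ 2 :=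
      Finset.single_le_sum (f := fun S : Finset V => Md G c S 0 ^ 2)
        (fun S _ => sq_nonneg _) (Finset.mem_univ _)
    rwa [Md_univ_zero, one_pow] at h1
  rw [Zn_eq]
  have hnR : (1 : ℝ) ≤ n := by exact_mod_cast hn
  set Z := ∑ S : Finset V, Md G c S 0 ^ 2
  have : (((n : ℝ) ^ 2 + n) / 2) * Z < 2 * (n : ℝ) ^ 2 * Z := by
    have hcoeff : ((n : ℝ) ^ 2 + n) / 2 < 2 * (n : ℝ) ^ 2 := by nlinarith
    have hZpos : (0 : ℝ) < Z := lt_of_lt_of_le one_pos hZn1'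
    exact mul_lt_mul_of_pos_right hcoeff hZpos
  linarith

end Final
end Stmt3Proof

/-- For every finite simple graph `G` with `n = |V| ≥ 1` and every `c > 0`, the total
weight of near-perfect matchings of `G □ K₂` (matchings with `n - 1` edges) is strictly
less than `2n²` times the total weight of perfect matchings: `Z_{n-1} < 2n²·Z_n`. -/
theorem stmt3 {V : Type*} [Fintype V] (G : SimpleGraph V) (hn : 1 ≤ Fintype.card V)
    (c : ℝ) (hc : 0 < c) :
    Zk G c (Fintype.card V - 1) <
      2 * (Fintype.card V : ℝ) ^ 2 * Zk G c (Fintype.card V) := by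
  exact Stmt3Proof.main G c hn hc
end

section
/- For every finite simple graph G=(V,E) with n=|V| and every c>0: Σ_{(u₁,u₂)} Σ_{S ⊆ V∖{u₁,u₂}} c^{2|S|+2}·PM(S∪{u₁})·PM(S∪{u₂}) ≤ n² · Σ_{S⊆V} c^{2|S|}·PM(S)², where the outer sum is over ordered pairs (u₁,u₂) ∈ V×V (including u₁=u₂, in which case S ranges over subsets of V∖{u₁}). -/
open scoped Classical

lemma aux_key {V : Type*} [Fintype V] (G : SimpleGraph V) (c : ℝ) (hc : 0 < c)
    (A : Finset V) (u : V) (hu : u ∈ A) :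
    ∑ S ∈ ((Finset.univ : Finset V) \ A).powerset,
        c ^ (2 * S.card + 2) * (PMcount G (insert u S) : ℝ) ^ 2
      ≤ ∑ S ∈ (Finset.univ : Finset V).powerset,
          c ^ (2 * S.card) * (PMcount G S : ℝ) ^ 2 := by
  have hinj : ∀ S ∈ ((Finset.univ : Finset V) \ A).powerset, u ∉ S := by
    intro S hS
    intro huS
    have := Finset.mem_powerset.mp hS huS
    simp [hu] at this
  have h1 : ∑ S ∈ ((Finset.univ : Finset V) \ A).powerset,
      c ^ (2 * S.card + 2) * (PMcount G (insert u S) : ℝ) ^ 2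
      = ∑ T ∈ (((Finset.univ : Finset V) \ A).powerset).image (insert u),
          c ^ (2 * T.card) * (PMcount G T : ℝ) ^ 2 := by
    rw [Finset.sum_image]
    · apply Finset.sum_congr rfl
      intro S hS
      rw [Finset.card_insert_of_notMem (hinj S hS)]
      ring_nf
    · intro S hS T hT hST
      have hS' := hinj S hS
      have hT' := hinj T hT
      have : S = T := by
        ext x
        constructor
        · intro hx
          have : x ∈ insert u T := hST ▸ Finset.mem_insert_of_mem hx
          rcases Finset.mem_insert.mp this with h | h
          · exact absurd (h ▸ hx) hS'
          · exact h
        · intro hx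
          have : x ∈ insert u S := hST ▸ Finset.mem_insert_of_mem hx
          rcases Finset.mem_insert.mp this with h | h
          · exact absurd (h ▸ hx) hT'
          · exact h
      exact this
  rw [h1]
  apply Finset.sum_le_sum_of_subset_of_nonneg
  · intro T _
    simp
  · intro T _ _
    positivity

/-- For every finite simple graph `G = (V,E)` with `n = |V|` and every `c > 0`:
`Σ_{(u₁,u₂)} Σ_{S ⊆ V∖{u₁,u₂}} c^{2|S|+2}·PM(S∪{u₁})·PM(S∪{u₂})
  ≤ n² · Σ_{S⊆V} c^{2|S|}·PM(S)²`,
where the outer sum is over ordered pairs `(u₁,u₂) ∈ V × V` (including `u₁ = u₂`). -/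
theorem stmt5 {V : Type*} [Fintype V] (G : SimpleGraph V) (c : ℝ) (hc : 0 < c) :
    ∑ u₁ : V, ∑ u₂ : V,
      ∑ S ∈ ((Finset.univ : Finset V) \ {u₁, u₂}).powerset,
        c ^ (2 * S.card + 2) * (PMcount G (insert u₁ S) : ℝ) * (PMcount G (insert u₂ S) : ℝ)
    ≤ (Fintype.card V : ℝ) ^ 2 *
        ∑ S ∈ (Finset.univ : Finset V).powerset,
          c ^ (2 * S.card) * (PMcount G S : ℝ) ^ 2 := by
  set F : ℝ := ∑ S ∈ (Finset.univ : Finset V).powerset,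
      c ^ (2 * S.card) * (PMcount G S : ℝ) ^ 2 with hF
  have inner_le : ∀ u₁ u₂ : V,
      ∑ S ∈ ((Finset.univ : Finset V) \ {u₁, u₂}).powerset,
        c ^ (2 * S.card + 2) * (PMcount G (insert u₁ S) : ℝ) * (PMcount G (insert u₂ S) : ℝ)
      ≤ F := by
    intro u₁ u₂
    have hstep : ∑ S ∈ ((Finset.univ : Finset V) \ {u₁, u₂}).powerset,
        c ^ (2 * S.card + 2) * (PMcount G (insert u₁ S) : ℝ) * (PMcount G (insert u₂ S) : ℝ)
        ≤ (∑ S ∈ ((Finset.univ : Finset V) \ {u₁, u₂}).powerset,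
            c ^ (2 * S.card + 2) * (PMcount G (insert u₁ S) : ℝ) ^ 2
          + ∑ S ∈ ((Finset.univ : Finset V) \ {u₁, u₂}).powerset,
            c ^ (2 * S.card + 2) * (PMcount G (insert u₂ S) : ℝ) ^ 2) / 2 := by
      rw [← Finset.sum_add_distrib, Finset.sum_div]
      apply Finset.sum_le_sum
      intro S _
      have hcp : (0:ℝ) ≤ c ^ (2 * S.card + 2) := by positivity
      nlinarith [hcp, two_mul_le_add_sq ((PMcount G (insert u₁ S) : ℝ)) ((PMcount G (insert u₂ S) : ℝ))]
    have h1 := aux_key G c hc {u₁, u₂} u₁ (by simp)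
    have h2 := aux_key G c hc {u₁, u₂} u₂ (by simp)
    calc _ ≤ _ := hstep
      _ ≤ (F + F) / 2 := by
          rw [← hF] at h1 h2
          linarith
      _ = F := by ring
  have hFnonneg : 0 ≤ F := by
    apply Finset.sum_nonneg
    intro S _
    positivity
  calc ∑ u₁ : V, ∑ u₂ : V,
      ∑ S ∈ ((Finset.univ : Finset V) \ {u₁, u₂}).powerset,
        c ^ (2 * S.card + 2) * (PMcount G (insert u₁ S) : ℝ) * (PMcount G (insert u₂ S) : ℝ)
      ≤ ∑ _u₁ : V, ∑ _u₂ : V, F := by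
        apply Finset.sum_le_sum
        intro u₁ _
        apply Finset.sum_le_sum
        intro u₂ _
        exact inner_le u₁ u₂
    _ = (Fintype.card V : ℝ) ^ 2 * F := by
        simp [Finset.sum_const, Finset.card_univ]
        ring
end

section
/- For any finite simple graph G=(V,E) equipped with nonnegative edge weights (λ_e)_{e∈E}, the weighted matching counts are log-concave: for every integer k ≥ 1, Z_{k-1}·Z_{k+1} ≤ Z_k², where Z_k = Σ_{M matching of G, |M|=k} ∏_{e∈M} λ_e. -/
open scoped Classical

/-- `Zw G lam k` is the sum, over all matchings `M` of `G` with exactly `k` edges, of the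
product of the edge weights `∏_{e ∈ M} lam e`. -/
noncomputable def Zw {α : Type*} [Fintype α] (G : SimpleGraph α) (lam : Sym2 α → ℝ)
    (k : ℕ) : ℝ :=
  ∑ M ∈ Finset.univ.filter (fun M : Finset (Sym2 α) => IsMatchingSet G M ∧ M.card = k),
    ∏ e ∈ M, lam e

/-!
Fix matchings `A` and `B` with `#B = #A + 2` and consider the connected components of the graph
with edge set `A ∆ B`. A component has at least as many edges as vertices minus one, while the
`B`-edges in it cover twice their number of vertices, so it contains at most one more edge of `B`
than of `A`. Enumerate the components and follow the running count of `B`-edges minus `A`-edges: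
it rises by at most one per component and ends at `2`, hence it equals `1` at the first component
where it becomes positive. Exchanging `A` and `B` on all later components gives two matchings with
`#A + 1` edges each and the same multiset of edges; the symmetric difference and the crossing point
are unchanged, so the exchange is an involution. It embeds the pairs counted by `Z_{k-1} Z_{k+1}`
weight-preservingly into those counted by `Z_k²`, and the weights are nonnegative.
-/

open Finset SimpleGraph
open scoped symmDiff

namespace IsMatchingSet

variable {V : Type*} {G : SimpleGraph V} {A B : Finset (Sym2 V)}

lemma symmDiff_filter (hA : IsMatchingSet G A) (hB : IsMatchingSet G B)
    {p : Sym2 V → Prop} [DecidablePred p]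
    (hp : ∀ e ∈ A ∆ B, ∀ f ∈ A ∆ B, ∀ v ∈ e, v ∈ f → (p e ↔ p f)) :
    IsMatchingSet G (A ∆ {e ∈ A ∆ B | p e}) := by
  set F := {e ∈ A ∆ B | p e}
  have hFB : ∀ f ∈ F \ A, f ∈ B ∧ f ∈ A ∆ B ∧ p f := fun f hf => by
    simp only [F, mem_sdiff, mem_filter, mem_symmDiff] at hf ⊢; tauto
  have mixed : ∀ e ∈ A \ F, ∀ f ∈ F \ A, ∀ v ∈ e, v ∉ f := by
    intro e he f hf v hve hvf
    obtain ⟨hfB, hfD, hpf⟩ := hFB f hf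
    have hef : e ≠ f := by rintro rfl; exact (mem_sdiff.1 hf).2 (mem_sdiff.1 he).1
    by_cases heB : e ∈ B
    · exact hB.2 e heB f hfB hef v hve hvf
    · have heD : e ∈ A ∆ B := mem_symmDiff.2 (Or.inl ⟨(mem_sdiff.1 he).1, heB⟩)
      exact (mem_sdiff.1 he).2 (mem_filter.2 ⟨heD, (hp e heD f hfD v hve hvf).2 hpf⟩)
  refine ⟨fun e he => ?_, fun e he f hf hef v hve => ?_⟩
  · rcases mem_symmDiff.1 he with ⟨heA, -⟩ | ⟨heF, heA⟩
    · exact hA.1 e heA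
    · exact hB.1 e (hFB e (mem_sdiff.2 ⟨heF, heA⟩)).1
  · rw [symmDiff_def, sup_eq_union, mem_union] at he hf
    rcases he with he | he <;> rcases hf with hf | hf
    · exact hA.2 e (mem_sdiff.1 he).1 f (mem_sdiff.1 hf).1 hef v hve
    · exact mixed e he f hf v hve
    · exact fun hvf => mixed f hf e he v hvf hve
    · exact hB.2 e (hFB e he).1 f (hFB f hf).1 hef v hve

end IsMatchingSet

namespace MatchingLogConcave

variable {V : Type*}

lemma apply_sInf_setOf_one_le_eq_one {P : ℕ → ℤ} (h₀ : P 0 ≤ 1)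
    (hsucc : ∀ t, P (t + 1) ≤ P t + 1) (hex : ∃ t, 1 ≤ P t) :
    P (sInf {t | 1 ≤ P t}) = 1 := by
  have hmem : 1 ≤ P (sInf {t | 1 ≤ P t}) := Nat.sInf_mem hex
  refine le_antisymm ?_ hmem
  cases hκ : sInf {t | 1 ≤ P t} with
  | zero => exact h₀
  | succ j =>
    have hj : ¬1 ≤ P j := Nat.notMem_of_lt_sInf (s := {t | 1 ≤ P t}) (by omega)
    linarith [hsucc j]

lemma sInf_eq_of_forall_le_sInf_mem_iff {S T : Set ℕ} (hS : S.Nonempty)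
    (hST : ∀ t ≤ sInf S, t ∈ T ↔ t ∈ S) : sInf T = sInf S := by
  have hmem : sInf S ∈ T := (hST _ le_rfl).2 (Nat.sInf_mem hS)
  refine le_antisymm (Nat.sInf_le hmem) (not_lt.1 fun hlt => ?_)
  exact Nat.notMem_of_lt_sInf hlt ((hST _ hlt.le).1 (Nat.sInf_mem ⟨_, hmem⟩))

noncomputable def excess (A B : Finset (Sym2 V)) (p : Sym2 V → Prop) [DecidablePred p] : ℤ :=
  #{e ∈ B \ A | p e} - #{e ∈ A \ B | p e}

lemma excess_swap (A B : Finset (Sym2 V)) (p : Sym2 V → Prop) [DecidablePred p] :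
    excess B A p = -excess A B p := by
  simp only [excess]; ring

lemma excess_add_excess_not (A B : Finset (Sym2 V)) (p : Sym2 V → Prop) [DecidablePred p] :
    excess A B p + excess A B (fun e => ¬p e) = #B - #A := by
  have hB : #{e ∈ B \ A | p e} + #{e ∈ B \ A | ¬p e} = #(B \ A) :=
    card_filter_add_card_filter_not _
  have hA : #{e ∈ A \ B | p e} + #{e ∈ A \ B | ¬p e} = #(A \ B) :=
    card_filter_add_card_filter_not _
  have h := card_sdiff_add_card_inter B A
  have h' := card_sdiff_add_card_inter A B
  rw [inter_comm] at h'
  simp only [excess]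
  omega

lemma excess_of_forall (A B : Finset (Sym2 V)) {p : Sym2 V → Prop} [DecidablePred p]
    (hp : ∀ e ∈ A ∆ B, p e) : excess A B p = #B - #A := by
  have hnot : excess A B (fun e => ¬p e) = 0 := by
    have : ∀ S T : Finset (Sym2 V), S ∆ T = A ∆ B → {e ∈ T \ S | ¬p e} = ∅ := by
      intro S T hST
      refine filter_eq_empty_iff.2 fun e he => not_not.2 (hp e ?_)
      rw [← hST, mem_symmDiff]
      exact Or.inr (mem_sdiff.1 he)
    simp only [excess, this A B rfl, this B A (symmDiff_comm _ _), card_empty, sub_self]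
  linarith [excess_add_excess_not A B p]

lemma excess_or (A B : Finset (Sym2 V)) {p q : Sym2 V → Prop} [DecidablePred p] [DecidablePred q]
    (hpq : ∀ e, p e → ¬q e) :
    excess A B (fun e => p e ∨ q e) = excess A B p + excess A B q := by
  have hd : ∀ s : Finset (Sym2 V), Disjoint {e ∈ s | p e} {e ∈ s | q e} := fun s =>
    disjoint_filter.2 fun e _ => hpq e
  simp only [excess, filter_or, card_union_of_disjoint (hd _)]
  push_cast; ring

lemma excess_symmDiff_of_forall_not (A B F : Finset (Sym2 V)) {p : Sym2 V → Prop}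
    [DecidablePred p] (hF : ∀ e ∈ F, ¬p e) : excess (A ∆ F) (B ∆ F) p = excess A B p := by
  have key : ∀ S T : Finset (Sym2 V), {e ∈ T ∆ F \ S ∆ F | p e} = {e ∈ T \ S | p e} := by
    intro S T
    ext e
    by_cases he : e ∈ F
    · simp [hF e he]
    · simp [mem_symmDiff, he]
  simp only [excess, key]

lemma card_symmDiff_filter (A B : Finset (Sym2 V)) (p : Sym2 V → Prop) [DecidablePred p] :
    (#(A ∆ {e ∈ A ∆ B | p e}) : ℤ) = #A + excess A B p := by
  set F := {e ∈ A ∆ B | p e}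
  have hout : F \ A = {e ∈ B \ A | p e} := by ext e; simp [F, mem_symmDiff]; tauto
  have hin : F ∩ A = {e ∈ A \ B | p e} := by ext e; simp [F, mem_symmDiff]; tauto
  have hsplit := card_sdiff_add_card_inter A F
  rw [inter_comm, hin] at hsplit
  rw [symmDiff_def, sup_eq_union, card_union_of_disjoint disjoint_sdiff_sdiff, hout, excess]
  omega

lemma prod_symmDiff_mul_prod_symmDiff {M : Type*} [CommMonoid M] (f : Sym2 V → M)
    {A B F : Finset (Sym2 V)} (hF : F ⊆ A ∆ B) :
    (∏ e ∈ A ∆ F, f e) * ∏ e ∈ B ∆ F, f e = (∏ e ∈ A, f e) * ∏ e ∈ B, f e := by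
  have split : ∀ S T : Finset (Sym2 V), S = S \ F ∪ F \ T → Disjoint (S \ F) (F \ T) →
      ∏ e ∈ S, f e = (∏ e ∈ S \ F, f e) * ∏ e ∈ F \ T, f e := fun S T hS hd => by
    rw [← prod_union hd, ← hS]
  have hA : A = A \ F ∪ F \ B := by
    ext e; have := @hF e; simp only [mem_union, mem_sdiff, mem_symmDiff] at this ⊢; tauto
  have hB : B = B \ F ∪ F \ A := by
    ext e; have := @hF e; simp only [mem_union, mem_sdiff, mem_symmDiff] at this ⊢; tauto
  rw [split A B hA (disjoint_sdiff_self_left.mono_right sdiff_subset),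
    split B A hB (disjoint_sdiff_self_left.mono_right sdiff_subset),
    symmDiff_def, symmDiff_def, sup_eq_union, sup_eq_union, prod_union disjoint_sdiff_sdiff,
    prod_union disjoint_sdiff_sdiff, mul_mul_mul_comm,
    mul_comm (∏ e ∈ F \ A, f e), mul_mul_mul_comm]

lemma two_mul_card_le_card_of_forall_mem {X : Finset (Sym2 V)} {S : Finset V}
    (hdiag : ∀ e ∈ X, ¬e.IsDiag)
    (hdisj : ∀ e ∈ X, ∀ f ∈ X, e ≠ f → ∀ v ∈ e, v ∉ f)
    (hS : ∀ e ∈ X, ∀ v ∈ e, v ∈ S) : 2 * #X ≤ #S := by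
  calc 2 * #X = #(X.biUnion Sym2.toFinset) := by
        rw [card_biUnion, mul_comm, ← smul_eq_mul, ← sum_const]
        · exact sum_congr rfl fun e he =>
            (Sym2.card_toFinset_of_not_isDiag e (hdiag e he)).symm
        · exact fun e he f hf hef => disjoint_left.2 fun v hve hvf =>
            hdisj e he f hf hef v (Sym2.mem_toFinset.1 hve) (Sym2.mem_toFinset.1 hvf)
    _ ≤ #S := card_le_card fun v hv => by
        obtain ⟨e, he, hve⟩ := mem_biUnion.1 hv
        exact hS e he v (Sym2.mem_toFinset.1 hve)

lemma connectedComponentMk_eq_of_mem {D : Set (Sym2 V)} {e : Sym2 V} (he : e ∈ D) {v w : V}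
    (hv : v ∈ e) (hw : w ∈ e) :
    (fromEdgeSet D).connectedComponentMk v = (fromEdgeSet D).connectedComponentMk w := by
  by_cases hvw : v = w
  · rw [hvw]
  · rw [(Sym2.mem_and_mem_iff hvw).1 ⟨hv, hw⟩] at he
    exact ConnectedComponent.sound ((fromEdgeSet_adj _).2 ⟨he, hvw⟩).reachable

variable [Fintype V]

-- An arbitrary enumeration of the components of the graph with edge set `D`, used to order them.
noncomputable def componentIndex (D : Finset (Sym2 V)) (e : Sym2 V) : ℕ :=
  Fintype.equivFin (fromEdgeSet (D : Set (Sym2 V))).ConnectedComponent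
    ((fromEdgeSet (D : Set (Sym2 V))).connectedComponentMk e.out.1)

lemma componentIndex_eq_of_mem {D : Finset (Sym2 V)} {e : Sym2 V} (he : e ∈ D) {v : V}
    (hv : v ∈ e) : componentIndex D e =
      Fintype.equivFin _ ((fromEdgeSet (D : Set (Sym2 V))).connectedComponentMk v) := by
  rw [componentIndex, connectedComponentMk_eq_of_mem (D := D) he (Sym2.out_fst_mem e) hv]

lemma componentIndex_eq_of_mem_of_mem {D : Finset (Sym2 V)} {e f : Sym2 V} (he : e ∈ D)
    (hf : f ∈ D) {v : V} (hve : v ∈ e) (hvf : v ∈ f) :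
    componentIndex D e = componentIndex D f := by
  rw [componentIndex_eq_of_mem he hve, componentIndex_eq_of_mem hf hvf]

lemma natCard_edgeSet_toSimpleGraph_le (D : Finset (Sym2 V))
    (C : (fromEdgeSet (D : Set (Sym2 V))).ConnectedComponent) :
    Nat.card C.toSimpleGraph.edgeSet ≤
      #{e ∈ D | componentIndex D e = Fintype.equivFin _ C} := by
  rw [Nat.card_coe_set_eq, ← Set.ncard_coe_finset]
  refine Set.ncard_le_ncard_of_injOn (Sym2.map Subtype.val) (fun e he => ?_)
    (Sym2.map.injective Subtype.val_injective).injOn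
  induction e using Sym2.ind with
  | h u v =>
    have huv : s(u.1, v.1) ∈ D := ((fromEdgeSet_adj _).1 he).1
    rw [Sym2.map_mk, coe_filter, Set.mem_ofPred_eq,
      componentIndex_eq_of_mem huv (Sym2.mem_mk_left _ _)]
    exact ⟨huv, congrArg (fun c => (Fintype.equivFin _ c : ℕ)) u.2⟩

lemma two_mul_card_filter_componentIndex_le {D M : Finset (Sym2 V)} (hMD : M ⊆ D)
    (hdiag : ∀ e ∈ M, ¬e.IsDiag) (hdisj : ∀ e ∈ M, ∀ f ∈ M, e ≠ f → ∀ v ∈ e, v ∉ f)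
    (t : ℕ) :
    2 * #{e ∈ M | componentIndex D e = t} ≤ #{e ∈ D | componentIndex D e = t} + 1 := by
  set X := {e ∈ M | componentIndex D e = t}
  obtain hX | ⟨e₀, he₀⟩ := X.eq_empty_or_nonempty
  · simp [hX]
  set C := (fromEdgeSet (D : Set (Sym2 V))).connectedComponentMk e₀.out.1
  have ht : componentIndex D e₀ = t := (mem_filter.1 he₀).2
  have mem_C : ∀ e ∈ X, ∀ v ∈ e, v ∈ C := by
    intro e he v hv
    have := (mem_filter.1 he).2.trans ht.symm
    rwa [componentIndex_eq_of_mem (hMD (mem_filter.1 he).1) hv, componentIndex, Fin.val_inj,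
      Equiv.apply_eq_iff_eq] at this
  calc 2 * #X ≤ #{v | v ∈ C} :=
        two_mul_card_le_card_of_forall_mem (fun e he => hdiag e (mem_filter.1 he).1)
          (fun e he f hf => hdisj e (mem_filter.1 he).1 f (mem_filter.1 hf).1)
          fun e he v hv => mem_filter.2 ⟨mem_univ v, mem_C e he v hv⟩
    _ = Nat.card C := by rw [Nat.card_eq_fintype_card, Fintype.card_subtype]
    _ ≤ Nat.card C.toSimpleGraph.edgeSet + 1 :=
        C.connected_toSimpleGraph.card_vert_le_card_edgeSet_add_one
    _ ≤ #{e ∈ D | componentIndex D e = t} + 1 := by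
        rw [← ht]
        exact Nat.add_le_add_right (natCard_edgeSet_toSimpleGraph_le D C) 1

lemma excess_componentIndex_eq_le_one {G : SimpleGraph V} {A B : Finset (Sym2 V)}
    (hB : IsMatchingSet G B) (t : ℕ) : excess A B (componentIndex (A ∆ B) · = t) ≤ 1 := by
  have hsplit : #{e ∈ A ∆ B | componentIndex (A ∆ B) e = t} =
      #{e ∈ B \ A | componentIndex (A ∆ B) e = t} +
        #{e ∈ A \ B | componentIndex (A ∆ B) e = t} := by
    rw [symmDiff_def, sup_eq_union, filter_union, union_comm,
      card_union_of_disjoint (disjoint_filter_filter disjoint_sdiff_sdiff).symm]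
  have h := two_mul_card_filter_componentIndex_le (D := A ∆ B) (M := B \ A)
    (fun e he => mem_symmDiff.2 (Or.inr (mem_sdiff.1 he)))
    (fun e he => G.not_isDiag_of_mem_edgeSet (hB.1 e (mem_sdiff.1 he).1))
    (fun e he f hf => hB.2 e (mem_sdiff.1 he).1 f (mem_sdiff.1 hf).1) t
  simp only [excess]
  omega

noncomputable def pivot (A B : Finset (Sym2 V)) : ℕ :=
  sInf {t | 1 ≤ excess A B (componentIndex (A ∆ B) · ≤ t)}

noncomputable def flipSet (A B : Finset (Sym2 V)) : Finset (Sym2 V) :=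
  {e ∈ A ∆ B | pivot A B < componentIndex (A ∆ B) e}

noncomputable def rebalance (p : Finset (Sym2 V) × Finset (Sym2 V)) :
    Finset (Sym2 V) × Finset (Sym2 V) :=
  (p.1 ∆ flipSet p.1 p.2, p.2 ∆ flipSet p.1 p.2)

variable {A B : Finset (Sym2 V)}

lemma exists_one_le_excess (h : #A < #B) :
    ∃ t, 1 ≤ excess A B (componentIndex (A ∆ B) · ≤ t) := by
  refine ⟨Fintype.card (fromEdgeSet (↑(A ∆ B) : Set (Sym2 V))).ConnectedComponent, ?_⟩
  rw [excess_of_forall A B (p := (componentIndex (A ∆ B) · ≤ _)) fun e _ => (Fin.is_lt _).le]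
  omega

lemma excess_pivot_eq_one {G : SimpleGraph V} (hB : IsMatchingSet G B) (h : #A < #B) :
    excess A B (componentIndex (A ∆ B) · ≤ pivot A B) = 1 := by
  refine apply_sInf_setOf_one_le_eq_one ?_ (fun t => ?_) (exists_one_le_excess h)
  · simp only [Nat.le_zero]
    exact excess_componentIndex_eq_le_one hB 0
  · simp only [Nat.le_add_one_iff]
    rw [excess_or A B fun e he he' => by omega]
    linarith [excess_componentIndex_eq_le_one (A := A) hB (t + 1)]

lemma excess_pivot_lt_eq_one {G : SimpleGraph V} (hB : IsMatchingSet G B)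
    (hcard : #B = #A + 2) :
    excess A B (pivot A B < componentIndex (A ∆ B) ·) = 1 := by
  have h := excess_add_excess_not A B (componentIndex (A ∆ B) · ≤ pivot A B)
  simp only [not_le] at h
  rw [excess_pivot_eq_one hB (by omega)] at h
  omega

lemma card_rebalance {G : SimpleGraph V} (hB : IsMatchingSet G B) (hcard : #B = #A + 2) :
    #(rebalance (A, B)).1 = #A + 1 ∧ #(rebalance (A, B)).2 = #A + 1 := by
  have h := excess_pivot_lt_eq_one hB hcard
  have h₁ := card_symmDiff_filter A B (pivot A B < componentIndex (A ∆ B) ·)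
  have h₂ := card_symmDiff_filter B A (pivot A B < componentIndex (A ∆ B) ·)
  rw [symmDiff_comm B A, excess_swap] at h₂
  simp only [rebalance, flipSet]
  omega

lemma isMatchingSet_rebalance {G : SimpleGraph V} (hA : IsMatchingSet G A)
    (hB : IsMatchingSet G B) :
    IsMatchingSet G (rebalance (A, B)).1 ∧ IsMatchingSet G (rebalance (A, B)).2 := by
  have hp : ∀ e ∈ A ∆ B, ∀ f ∈ A ∆ B, ∀ v ∈ e, v ∈ f →
      (pivot A B < componentIndex (A ∆ B) e ↔ pivot A B < componentIndex (A ∆ B) f) :=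
    fun e he f hf v hve hvf => by rw [componentIndex_eq_of_mem_of_mem he hf hve hvf]
  have hBA := hB.symmDiff_filter hA (by rw [symmDiff_comm]; exact hp)
  rw [symmDiff_comm B A] at hBA
  exact ⟨hA.symmDiff_filter hB hp, hBA⟩

lemma prod_rebalance {M : Type*} [CommMonoid M] (f : Sym2 V → M) (A B : Finset (Sym2 V)) :
    (∏ e ∈ (rebalance (A, B)).1, f e) * ∏ e ∈ (rebalance (A, B)).2, f e =
      (∏ e ∈ A, f e) * ∏ e ∈ B, f e :=
  prod_symmDiff_mul_prod_symmDiff f (filter_subset _ _)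

lemma rebalance_rebalance (h : #A < #B) : rebalance (rebalance (A, B)) = (A, B) := by
  set F := flipSet A B
  have hD : (A ∆ F) ∆ (B ∆ F) = A ∆ B := by
    rw [symmDiff_symmDiff_symmDiff_comm, symmDiff_self, symmDiff_bot]
  have hpivot : pivot (A ∆ F) (B ∆ F) = pivot A B := by
    refine sInf_eq_of_forall_le_sInf_mem_iff (exists_one_le_excess h) fun t ht => ?_
    have hlt : ∀ e ∈ F, ¬componentIndex (A ∆ B) e ≤ t := fun e he =>
      not_le.2 (ht.trans_lt (mem_filter.1 he).2)
    simp only [Set.mem_ofPred_eq, hD, excess_symmDiff_of_forall_not A B F hlt]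
  have hF : flipSet (A ∆ F) (B ∆ F) = F := by
    change {e ∈ (A ∆ F) ∆ (B ∆ F) |
      pivot (A ∆ F) (B ∆ F) < componentIndex ((A ∆ F) ∆ (B ∆ F)) e} = F
    rw [hD, hpivot]
    rfl
  change ((A ∆ F) ∆ flipSet (A ∆ F) (B ∆ F), (B ∆ F) ∆ flipSet (A ∆ F) (B ∆ F)) =
    (A, B)
  rw [hF, symmDiff_symmDiff_cancel_right, symmDiff_symmDiff_cancel_right]

noncomputable def matchingsOfCard (G : SimpleGraph V) (k : ℕ) : Finset (Finset (Sym2 V)) :=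
  {M | IsMatchingSet G M ∧ #M = k}

lemma Zw_mul_Zw (G : SimpleGraph V) (lam : Sym2 V → ℝ) (j k : ℕ) :
    Zw G lam j * Zw G lam k = ∑ p ∈ matchingsOfCard G j ×ˢ matchingsOfCard G k,
      (∏ e ∈ p.1, lam e) * ∏ e ∈ p.2, lam e := by
  rw [Zw, Zw, sum_mul_sum, sum_product]
  rfl

lemma injOn_rebalance :
    Set.InjOn rebalance {p : Finset (Sym2 V) × Finset (Sym2 V) | #p.1 < #p.2} := by
  rintro ⟨A, B⟩ hAB ⟨C, D⟩ hCD h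
  rw [← rebalance_rebalance hAB, ← rebalance_rebalance hCD, h]

lemma rebalance_mem_matchingsOfCard {G : SimpleGraph V} {m : ℕ}
    (hA : A ∈ matchingsOfCard G m) (hB : B ∈ matchingsOfCard G (m + 2)) :
    rebalance (A, B) ∈ matchingsOfCard G (m + 1) ×ˢ matchingsOfCard G (m + 1) := by
  simp only [matchingsOfCard, mem_product, mem_filter, mem_univ, true_and] at hA hB ⊢
  obtain ⟨hM₁, hM₂⟩ := isMatchingSet_rebalance hA.1 hB.1
  obtain ⟨hc₁, hc₂⟩ := card_rebalance (A := A) hB.1 (by omega)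
  exact ⟨⟨hM₁, by omega⟩, hM₂, by omega⟩

end MatchingLogConcave

open MatchingLogConcave

/-- For any finite simple graph `G = (V,E)` with nonnegative edge weights `(λ_e)_{e∈E}`,
the weighted matching counts are log-concave: for every `k ≥ 1`,
`Z_{k-1}·Z_{k+1} ≤ Z_k²`. -/
theorem stmt7 {V : Type*} [Fintype V] (G : SimpleGraph V) (lam : Sym2 V → ℝ)
    (hlam : ∀ e ∈ G.edgeSet, 0 ≤ lam e) (k : ℕ) (hk : 1 ≤ k) :
    Zw G lam (k - 1) * Zw G lam (k + 1) ≤ Zw G lam k ^ 2 := by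
  obtain ⟨m, rfl⟩ : ∃ m, k = m + 1 := ⟨k - 1, by omega⟩
  rw [Nat.add_sub_cancel, sq, Zw_mul_Zw, Zw_mul_Zw]
  set w : Finset (Sym2 V) × Finset (Sym2 V) → ℝ := fun p =>
    (∏ e ∈ p.1, lam e) * ∏ e ∈ p.2, lam e
  have hinj :
      Set.InjOn (rebalance (V := V)) ↑(matchingsOfCard G m ×ˢ matchingsOfCard G (m + 2)) :=
    injOn_rebalance.mono fun p hp => by
      simp only [coe_product, Set.mem_prod, mem_coe, matchingsOfCard, mem_filter] at hp
      exact show #p.1 < #p.2 by omega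
  have hw : ∀ p ∈ matchingsOfCard G (m + 1) ×ˢ matchingsOfCard G (m + 1), 0 ≤ w p := by
    simp only [mem_product, matchingsOfCard, mem_filter]
    exact fun p hp => mul_nonneg (prod_nonneg fun e he => hlam e (hp.1.2.1.1 e he))
      (prod_nonneg fun e he => hlam e (hp.2.2.1.1 e he))
  calc _ = ∑ p ∈ matchingsOfCard G m ×ˢ matchingsOfCard G (m + 2), w (rebalance p) :=
        sum_congr rfl fun p _ => (prod_rebalance lam p.1 p.2).symm
    _ = ∑ q ∈ (matchingsOfCard G m ×ˢ matchingsOfCard G (m + 2)).image rebalance, w q :=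
        (sum_image hinj).symm
    _ ≤ _ := sum_le_sum_of_subset_of_nonneg (image_subset_iff.2 fun p hp =>
        rebalance_mem_matchingsOfCard (mem_product.1 hp).1 (mem_product.1 hp).2)
        fun q hq _ => hw q hq
end

section
/- For every finite simple graph G with n=|V|≥1 and every c>0, the rescaled weighted matching partition function of G□K₂ satisfies Σ_{k=0}^{n} (4n²)^k·Z_k < 2·(4n²)^n·Z_n; equivalently, under the edge weights λ'_e = 4n²·λ_e, the total weight of all matchings is strictly less than twice the total weight of perfect matchings. -/
open scoped Classical

/-!
A matching of `G □ K₂` is a pair of matchings `M₁, M₂` of `G`, one in each layer, together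
with rungs at a set `T` of vertices exposed by both. Group the matchings of `G` by their set
`S` of exposed vertices, with weight `f S = ∑ (λc²)^|M|`. Summing over `T` gives
`∑ₖ λᵏ Zₖ = ∑_{S,S'} f S f S' (1 + λ)^|S ∩ S'|`, while a perfect matching forces
`T = S = S'`, so `λⁿ Zₙ = ∑_S (f S)² λ^|S|`. The kernel `(1 + λ)^|S ∩ S'|` is the `n`-th
tensor power of `[[1, 1], [1, 1 + λ]]`, which is dominated by `r · diag(1, λ)` as soon as
`(x + y)² + λy² ≤ r (x² + λy²)`; hence the first sum is at most `rⁿ` times the second. For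
`λ = 4n²` one may take `r = 1 + (2n + 1)/(4n²)`, and Bernoulli's inequality gives `rⁿ < 2`.
-/

open Finset

theorem one_add_pow_lt_two {t : ℝ} (ht : 0 ≤ t) {n : ℕ} (h : 2 * n * t < 1 + t) :
    (1 + t) ^ n < 2 := by
  have hpos : 0 < 1 + t := by linarith
  -- Bernoulli's inequality for `(1 + t)⁻¹ = 1 - t / (1 + t)`
  have hbern : 1 + n * (-(t / (1 + t))) ≤ ((1 + t) ^ n)⁻¹ := by
    rw [← inv_pow, show (1 + t)⁻¹ = 1 + -(t / (1 + t)) by field_simp; ring]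
    refine one_add_mul_le_pow ?_ n
    have : t / (1 + t) ≤ 1 := (div_le_one hpos).2 (by linarith)
    linarith
  have hsmall : n * (t / (1 + t)) < 1 / 2 := by
    rw [mul_div_assoc', div_lt_iff₀ hpos]
    linarith
  have : 1 / 2 < ((1 + t) ^ n)⁻¹ := by linarith
  rw [lt_inv_comm₀ (by norm_num) (by positivity)] at this
  linarith

theorem add_sq_add_mul_sq_le {n x y : ℝ} (hn : 0 < n) :
    (x + y) ^ 2 + 4 * n ^ 2 * y ^ 2 ≤
      (1 + (2 * n + 1) / (4 * n ^ 2)) * (x ^ 2 + 4 * n ^ 2 * y ^ 2) := by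
  have : (1 + (2 * n + 1) / (4 * n ^ 2)) * (x ^ 2 + 4 * n ^ 2 * y ^ 2) -
      ((x + y) ^ 2 + 4 * n ^ 2 * y ^ 2) = 2 * n * (y - x / (2 * n)) ^ 2 + (x / (2 * n)) ^ 2 := by
    field_simp; ring
  have : 0 ≤ 2 * n * (y - x / (2 * n)) ^ 2 + (x / (2 * n)) ^ 2 := by positivity
  linarith

theorem two_mul_mul_div_lt {n : ℝ} (hn : 0 < n) :
    2 * n * ((2 * n + 1) / (4 * n ^ 2)) < 1 + (2 * n + 1) / (4 * n ^ 2) := by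
  rw [← sub_pos]
  have : 1 + (2 * n + 1) / (4 * n ^ 2) - 2 * n * ((2 * n + 1) / (4 * n ^ 2)) =
      1 / (4 * n ^ 2) := by
    field_simp; ring
  rw [this]
  positivity

theorem Finset.sum_powerset_pow_card {ι R : Type*} [CommSemiring R] (a : R) (s : Finset ι) :
    ∑ t ∈ s.powerset, a ^ #t = (a + 1) ^ #s := by
  simpa using sum_pow_mul_eq_add_pow a 1 s

theorem Finset.sum_sum_mul_mul_fiberwise {ι κ R : Type*} [CommSemiring R] [Fintype κ]
    [DecidableEq κ] (s : Finset ι) (g : ι → κ) (a : ι → R) (K : κ → κ → R) :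
    ∑ x ∈ s, ∑ y ∈ s, a x * a y * K (g x) (g y) =
      ∑ i, ∑ j, (∑ x ∈ s with g x = i, a x) * (∑ y ∈ s with g y = j, a y) * K i j := by
  simp_rw [sum_mul_sum, sum_mul]
  rw [← sum_fiberwise (M := R) s g]
  refine sum_congr rfl fun i _ => ?_
  conv_rhs => rw [sum_comm]
  refine sum_congr rfl fun x hx => ?_
  rw [← sum_fiberwise (M := R) s g]
  refine sum_congr rfl fun j _ => sum_congr rfl fun y hy => ?_
  rw [(mem_filter.1 hx).2, (mem_filter.1 hy).2]

theorem sum_sum_powerset_insert {α M : Type*} [DecidableEq α] [AddCommMonoid M] {a : α}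
    {A : Finset α} (ha : a ∉ A) (F : Finset α → Finset α → M) :
    ∑ S ∈ (insert a A).powerset, ∑ S' ∈ (insert a A).powerset, F S S' =
      ∑ S ∈ A.powerset, ∑ S' ∈ A.powerset,
        (F S S' + F S (insert a S') + F (insert a S) S' + F (insert a S) (insert a S')) := by
  simp only [sum_powerset_insert ha, sum_add_distrib]
  abel

theorem sum_powerset_mul_pow_card_inter_le {α : Type*} [DecidableEq α] {lam r : ℝ}
    (hlam : 0 ≤ lam)
    (hform : ∀ x y : ℝ, (x + y) ^ 2 + lam * y ^ 2 ≤ r * (x ^ 2 + lam * y ^ 2))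
    (A : Finset α) (f : Finset α → ℝ) :
    ∑ S ∈ A.powerset, ∑ S' ∈ A.powerset, f S * f S' * (1 + lam) ^ #(S ∩ S') ≤
      r ^ #A * ∑ S ∈ A.powerset, f S ^ 2 * lam ^ #S := by
  have hr : 0 ≤ r := zero_le_one.trans (by simpa using hform 1 0)
  induction A using Finset.induction_on generalizing f with
  | empty => simp [sq]
  | @insert a A ha ih =>
    let g : Finset α → ℝ := fun S => f (insert a S)
    have hnot : ∀ S ∈ A.powerset, a ∉ S := fun S hS haS => ha (mem_powerset.1 hS haS)
    -- splitting off the coordinate `a` turns the kernel into `[[1, 1], [1, 1 + lam]]`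
    have hsplit : ∑ S ∈ (insert a A).powerset, ∑ S' ∈ (insert a A).powerset,
          f S * f S' * (1 + lam) ^ #(S ∩ S') =
        ∑ S ∈ A.powerset, ∑ S' ∈ A.powerset,
            (f S + g S) * (f S' + g S') * (1 + lam) ^ #(S ∩ S') +
          lam * ∑ S ∈ A.powerset, ∑ S' ∈ A.powerset,
            g S * g S' * (1 + lam) ^ #(S ∩ S') := by
      rw [sum_sum_powerset_insert ha, mul_sum, ← sum_add_distrib]
      refine sum_congr rfl fun S hS => ?_
      rw [mul_sum, ← sum_add_distrib]
      refine sum_congr rfl fun S' hS' => ?_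
      rw [inter_insert_of_notMem (hnot S hS), insert_inter_of_notMem (hnot S' hS'),
        ← insert_inter_distrib, card_insert_of_notMem fun h => hnot S hS (mem_inter.1 h).1]
      ring
    have hdiag : ∀ φ : Finset α → ℝ, ∑ S ∈ (insert a A).powerset, φ S ^ 2 * lam ^ #S =
        ∑ S ∈ A.powerset, φ S ^ 2 * lam ^ #S +
          lam * ∑ S ∈ A.powerset, φ (insert a S) ^ 2 * lam ^ #S := by
      intro φ
      rw [sum_powerset_insert ha, mul_sum]
      congr 1
      refine sum_congr rfl fun S hS => ?_
      rw [card_insert_of_notMem (hnot S hS)]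
      ring
    calc _ = _ := hsplit
      _ ≤ r ^ #A * ∑ S ∈ A.powerset, (f S + g S) ^ 2 * lam ^ #S
          + lam * (r ^ #A * ∑ S ∈ A.powerset, g S ^ 2 * lam ^ #S) :=
        add_le_add (ih _) (mul_le_mul_of_nonneg_left (ih g) hlam)
      _ = r ^ #A * ∑ S ∈ A.powerset, ((f S + g S) ^ 2 + lam * g S ^ 2) * lam ^ #S := by
        rw [mul_left_comm, ← mul_add, mul_sum _ _ lam, ← sum_add_distrib]
        exact congrArg _ (sum_congr rfl fun S _ => by ring)
      _ ≤ r ^ #A * ∑ S ∈ A.powerset, r * (f S ^ 2 + lam * g S ^ 2) * lam ^ #S := by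
        gcongr with S
        exact hform _ _
      _ = r ^ #(insert a A) * ∑ S ∈ (insert a A).powerset, f S ^ 2 * lam ^ #S := by
        rw [hdiag f, card_insert_of_notMem ha, pow_succ, mul_assoc, mul_sum _ _ lam,
          ← sum_add_distrib, mul_sum _ _ r]
        exact congrArg _ (sum_congr rfl fun S _ => by ring)


section CoveredVerts

variable {V : Type*} [DecidableEq V]

noncomputable def coveredVerts (M : Finset (Sym2 V)) : Finset V := M.biUnion Sym2.toFinset

@[simp] theorem mem_coveredVerts {M : Finset (Sym2 V)} {v : V} :
    v ∈ coveredVerts M ↔ ∃ e ∈ M, v ∈ e := by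
  simp [coveredVerts]

theorem coveredVerts_union (M N : Finset (Sym2 V)) :
    coveredVerts (M ∪ N) = coveredVerts M ∪ coveredVerts N :=
  union_biUnion

theorem card_coveredVerts {G : SimpleGraph V} {M : Finset (Sym2 V)} (hM : IsMatchingSet G M) :
    #(coveredVerts M) = 2 * #M := by
  rw [coveredVerts, card_biUnion, sum_const_nat, mul_comm]
  · exact fun e he =>
      Sym2.card_toFinset_of_not_isDiag e (G.not_isDiag_of_mem_edgeSet (hM.1 e he))
  · exact fun e he f hf hef => disjoint_left.2 fun v hve hvf =>
      hM.2 e he f hf hef v (Sym2.mem_toFinset.1 hve) (Sym2.mem_toFinset.1 hvf)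

noncomputable def exposedVerts [Fintype V] (M : Finset (Sym2 V)) : Finset V := (coveredVerts M)ᶜ

end CoveredVerts

namespace IsMatchingSet

variable {V W : Type*} {G : SimpleGraph V} {H : SimpleGraph W}

theorem union [DecidableEq V] {M N : Finset (Sym2 V)} (hM : IsMatchingSet G M)
    (hN : IsMatchingSet G N) (hMN : Disjoint (coveredVerts M) (coveredVerts N)) :
    IsMatchingSet G (M ∪ N) := by
  refine ⟨fun e he => (mem_union.1 he).elim (hM.1 e) (hN.1 e), ?_⟩
  intro e he f hf hef v hve hvf
  have hcross : ∀ e ∈ M, ∀ f ∈ N, v ∈ e → v ∉ f := fun e he f hf hve hvf =>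
    disjoint_left.1 hMN (mem_coveredVerts.2 ⟨e, he, hve⟩) (mem_coveredVerts.2 ⟨f, hf, hvf⟩)
  rcases mem_union.1 he with he | he <;> rcases mem_union.1 hf with hf | hf
  · exact hM.2 e he f hf hef v hve hvf
  · exact hcross e he f hf hve hvf
  · exact hcross f hf e he hvf hve
  · exact hN.2 e he f hf hef v hve hvf

theorem image_map [DecidableEq W] {M : Finset (Sym2 V)} (hM : IsMatchingSet G M) (φ : G ↪g H) :
    IsMatchingSet H (M.image (Sym2.map φ)) := by
  refine ⟨fun e he => ?_, fun e he f hf hef w hwe hwf => ?_⟩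
  · obtain ⟨e, he', rfl⟩ := mem_image.1 he
    exact φ.map_mem_edgeSet_iff.2 (hM.1 e he')
  · obtain ⟨e, he', rfl⟩ := mem_image.1 he
    obtain ⟨f, hf', rfl⟩ := mem_image.1 hf
    obtain ⟨v, hve, rfl⟩ := Sym2.mem_map.1 hwe
    obtain ⟨u, huf, huv⟩ := Sym2.mem_map.1 hwf
    rw [φ.injective huv] at huf
    exact hM.2 e he' f hf' (fun h => hef (h ▸ rfl)) v hve huf

theorem preimage_map {M : Finset (Sym2 W)} (hM : IsMatchingSet H M) (φ : G ↪g H) :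
    IsMatchingSet G (M.preimage (Sym2.map φ) (Sym2.map.injective φ.injective).injOn) := by
  refine ⟨fun e he => φ.map_mem_edgeSet_iff.1 (hM.1 _ (mem_preimage.1 he)),
    fun e he f hf hef v hve hvf => ?_⟩
  exact hM.2 _ (mem_preimage.1 he) _ (mem_preimage.1 hf)
    ((Sym2.map.injective φ.injective).ne hef) (φ v) (Sym2.mem_map.2 ⟨v, hve, rfl⟩)
    (Sym2.mem_map.2 ⟨v, hvf, rfl⟩)

end IsMatchingSet

section BoxProdK2

variable {V : Type*} {G : SimpleGraph V}

def rungEdge (v : V) : Sym2 (V × Fin 2) := s((v, 0), (v, 1))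

theorem mem_rungEdge {x : V × Fin 2} {v : V} : x ∈ rungEdge v ↔ x.1 = v := by
  obtain ⟨a, b⟩ := x
  fin_cases b <;> simp [rungEdge, Prod.ext_iff, eq_comm]

theorem rungEdge_injective : Function.Injective (rungEdge (V := V)) := fun v w h =>
  mem_rungEdge.1 (h ▸ mem_rungEdge.2 rfl : (v, (0 : Fin 2)) ∈ rungEdge w)

theorem mem_map_boxProdLeft {ℓ : Fin 2} {e : Sym2 V} {x : V × Fin 2} :
    x ∈ Sym2.map (G.boxProdLeft ⊤ ℓ) e ↔ x.2 = ℓ ∧ x.1 ∈ e := by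
  obtain ⟨a, b⟩ := x
  simp only [Sym2.mem_map, SimpleGraph.boxProdLeft_apply, Prod.ext_iff]
  constructor
  · rintro ⟨a, ha, rfl, rfl⟩
    exact ⟨rfl, ha⟩
  · rintro ⟨rfl, ha⟩
    exact ⟨a, ha, rfl, rfl⟩

theorem map_boxProdLeft_ne_rungEdge {ℓ : Fin 2} {e : Sym2 V} {v : V} :
    Sym2.map (G.boxProdLeft ⊤ ℓ) e ≠ rungEdge v := by
  intro h
  have h₀ : (v, 0) ∈ Sym2.map (G.boxProdLeft ⊤ ℓ) e := by rw [h]; exact mem_rungEdge.2 rfl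
  have h₁ : (v, 1) ∈ Sym2.map (G.boxProdLeft ⊤ ℓ) e := by rw [h]; exact mem_rungEdge.2 rfl
  exact zero_ne_one ((mem_map_boxProdLeft.1 h₀).1.trans (mem_map_boxProdLeft.1 h₁).1.symm)

theorem map_boxProdLeft_ne_map_boxProdLeft {ℓ ℓ' : Fin 2} (hℓ : ℓ ≠ ℓ') (e f : Sym2 V) :
    Sym2.map (G.boxProdLeft ⊤ ℓ) e ≠ Sym2.map (G.boxProdLeft ⊤ ℓ') f := by
  intro h
  induction e using Sym2.ind with
  | _ v w =>
    have hv : (v, ℓ) ∈ Sym2.map (G.boxProdLeft ⊤ ℓ) s(v, w) :=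
      mem_map_boxProdLeft.2 ⟨rfl, Sym2.mem_mk_left v w⟩
    rw [h] at hv
    exact hℓ (mem_map_boxProdLeft.1 hv).1

theorem exists_eq_of_mem_edgeSet_boxProd_top {e : Sym2 (V × Fin 2)}
    (he : e ∈ (G □ ⊤).edgeSet) :
    (∃ ℓ e₀, Sym2.map (G.boxProdLeft ⊤ ℓ) e₀ = e) ∨ ∃ v, rungEdge v = e := by
  induction e using Sym2.ind with
  | _ x y =>
    obtain ⟨a, i⟩ := x
    obtain ⟨b, j⟩ := y
    rw [SimpleGraph.mem_edgeSet, SimpleGraph.boxProd_adj] at he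
    rcases he with ⟨-, rfl⟩ | ⟨hij, rfl⟩
    · exact Or.inl ⟨i, s(a, b), rfl⟩
    · refine Or.inr ⟨a, ?_⟩
      fin_cases i <;> fin_cases j <;> simp_all [rungEdge, Sym2.eq_swap]

theorem isMatchingSet_image_rungEdge (T : Finset V) :
    IsMatchingSet (G □ ⊤) (T.image rungEdge) := by
  refine ⟨fun e he => ?_, fun e he f hf hef x hxe hxf => ?_⟩
  · obtain ⟨v, -, rfl⟩ := mem_image.1 he
    simp [rungEdge]
  · obtain ⟨v, -, rfl⟩ := mem_image.1 he
    obtain ⟨w, -, rfl⟩ := mem_image.1 hf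
    exact hef (congrArg rungEdge ((mem_rungEdge.1 hxe).symm.trans (mem_rungEdge.1 hxf)))

theorem mem_coveredVerts_image_map_boxProdLeft {ℓ : Fin 2} {M : Finset (Sym2 V)}
    {x : V × Fin 2} :
    x ∈ coveredVerts (M.image (Sym2.map (G.boxProdLeft ⊤ ℓ))) ↔
      x.2 = ℓ ∧ x.1 ∈ coveredVerts M := by
  simp only [mem_coveredVerts, exists_mem_image, mem_map_boxProdLeft]
  aesop

theorem mem_coveredVerts_image_rungEdge {T : Finset V} {x : V × Fin 2} :
    x ∈ coveredVerts (T.image rungEdge) ↔ x.1 ∈ T := by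
  simp [mem_coveredVerts, mem_rungEdge]

variable (G) in
noncomputable def liftMatching (M₁ M₂ : Finset (Sym2 V)) (T : Finset V) :
    Finset (Sym2 (V × Fin 2)) :=
  M₁.image (Sym2.map (G.boxProdLeft ⊤ 0)) ∪ M₂.image (Sym2.map (G.boxProdLeft ⊤ 1)) ∪
    T.image rungEdge

theorem isMatchingSet_liftMatching {M₁ M₂ : Finset (Sym2 V)} {T : Finset V}
    (h₁ : IsMatchingSet G M₁) (h₂ : IsMatchingSet G M₂)
    (hT₁ : Disjoint T (coveredVerts M₁)) (hT₂ : Disjoint T (coveredVerts M₂)) :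
    IsMatchingSet (G □ ⊤) (liftMatching G M₁ M₂ T) := by
  refine ((h₁.image_map (G.boxProdLeft ⊤ 0)).union
    (h₂.image_map (G.boxProdLeft ⊤ 1)) ?_).union (isMatchingSet_image_rungEdge T) ?_
  · refine disjoint_left.2 fun x hx₁ hx₂ => ?_
    rw [mem_coveredVerts_image_map_boxProdLeft] at hx₁ hx₂
    exact zero_ne_one (hx₁.1.symm.trans hx₂.1)
  · refine disjoint_left.2 fun x hx hxT => ?_
    rw [mem_coveredVerts_image_rungEdge] at hxT
    rw [coveredVerts_union, mem_union, mem_coveredVerts_image_map_boxProdLeft,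
      mem_coveredVerts_image_map_boxProdLeft] at hx
    rcases hx with ⟨-, hx⟩ | ⟨-, hx⟩
    · exact disjoint_left.1 hT₁ hxT hx
    · exact disjoint_left.1 hT₂ hxT hx

variable (G) in
noncomputable def layerEdges (ℓ : Fin 2) (M : Finset (Sym2 (V × Fin 2))) : Finset (Sym2 V) :=
  M.preimage (Sym2.map (G.boxProdLeft ⊤ ℓ))
    (Sym2.map.injective (G.boxProdLeft ⊤ ℓ).injective).injOn

noncomputable def rungVerts (M : Finset (Sym2 (V × Fin 2))) : Finset V :=
  M.preimage rungEdge rungEdge_injective.injOn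

theorem layerEdges_liftMatching (M₁ M₂ : Finset (Sym2 V)) (T : Finset V) :
    layerEdges G 0 (liftMatching G M₁ M₂ T) = M₁ ∧
      layerEdges G 1 (liftMatching G M₁ M₂ T) = M₂ := by
  have h₀₁ := map_boxProdLeft_ne_map_boxProdLeft (G := G) zero_ne_one
  have h₁₀ := map_boxProdLeft_ne_map_boxProdLeft (G := G) one_ne_zero
  constructor <;> ext e <;>
    simp only [layerEdges, liftMatching, Finset.mem_preimage, mem_union, mem_image,
      (Sym2.map.injective (G.boxProdLeft ⊤ _).injective).eq_iff, h₀₁, h₁₀,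
      map_boxProdLeft_ne_rungEdge.symm, exists_eq_right, and_false, exists_false, or_false,
      false_or]

theorem rungVerts_liftMatching (M₁ M₂ : Finset (Sym2 V)) (T : Finset V) :
    rungVerts (liftMatching G M₁ M₂ T) = T := by
  ext v
  simp only [rungVerts, liftMatching, Finset.mem_preimage, mem_union, mem_image,
    rungEdge_injective.eq_iff, map_boxProdLeft_ne_rungEdge, exists_eq_right, and_false,
    exists_false, false_or]

theorem liftMatching_layerEdges_rungVerts {M : Finset (Sym2 (V × Fin 2))}
    (hM : ∀ e ∈ M, e ∈ (G □ ⊤).edgeSet) :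
    liftMatching G (layerEdges G 0 M) (layerEdges G 1 M) (rungVerts M) = M := by
  ext e
  simp only [liftMatching, layerEdges, rungVerts, mem_union, mem_image, Finset.mem_preimage]
  constructor
  · rintro ((⟨e₀, he, rfl⟩ | ⟨e₀, he, rfl⟩) | ⟨v, hv, rfl⟩) <;> assumption
  · intro he
    rcases exists_eq_of_mem_edgeSet_boxProd_top (hM e he) with ⟨ℓ, e₀, rfl⟩ | ⟨v, rfl⟩
    · fin_cases ℓ
      exacts [Or.inl (Or.inl ⟨e₀, he, rfl⟩), Or.inl (Or.inr ⟨e₀, he, rfl⟩)]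
    · exact Or.inr ⟨v, he, rfl⟩

theorem disjoint_rungVerts_coveredVerts_layerEdges {M : Finset (Sym2 (V × Fin 2))}
    (hM : IsMatchingSet (G □ ⊤) M) (ℓ : Fin 2) :
    Disjoint (rungVerts M) (coveredVerts (layerEdges G ℓ M)) := by
  refine disjoint_left.2 fun v hv hcov => ?_
  obtain ⟨e₀, he₀, hve₀⟩ := mem_coveredVerts.1 hcov
  exact hM.2 _ (mem_preimage.1 hv) _ (mem_preimage.1 he₀) map_boxProdLeft_ne_rungEdge.symm
    (v, ℓ) (mem_rungEdge.2 rfl) (mem_map_boxProdLeft.2 ⟨rfl, hve₀⟩)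

theorem card_liftMatching (M₁ M₂ : Finset (Sym2 V)) (T : Finset V) :
    #(liftMatching G M₁ M₂ T) = #M₁ + #M₂ + #T := by
  rw [liftMatching, card_union_of_disjoint, card_union_of_disjoint,
    card_image_of_injective _ (Sym2.map.injective (G.boxProdLeft ⊤ 0).injective),
    card_image_of_injective _ (Sym2.map.injective (G.boxProdLeft ⊤ 1).injective),
    card_image_of_injective _ rungEdge_injective]
  · simp only [disjoint_left, mem_image]
    rintro _ ⟨e, -, rfl⟩ ⟨f, -, hf⟩
    exact map_boxProdLeft_ne_map_boxProdLeft one_ne_zero f e hf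
  · simp only [disjoint_left, mem_union, mem_image]
    rintro _ (⟨e, -, rfl⟩ | ⟨e, -, rfl⟩) ⟨v, -, hv⟩ <;>
      exact map_boxProdLeft_ne_rungEdge hv.symm

theorem filter_isDiag_liftMatching (M₁ M₂ : Finset (Sym2 V)) (T : Finset V) :
    (liftMatching G M₁ M₂ T).filter (fun e => (Sym2.map Prod.snd e).IsDiag) =
      liftMatching G M₁ M₂ ∅ := by
  ext e
  simp only [liftMatching, mem_filter, mem_union, mem_image, image_empty, Finset.notMem_empty,
    or_false]
  constructor
  · rintro ⟨(he | ⟨v, -, rfl⟩), hdiag⟩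
    · exact he
    · simp [rungEdge] at hdiag
  · rintro (⟨e, he, rfl⟩ | ⟨e, he, rfl⟩)
    · refine ⟨Or.inl (Or.inl ⟨e, he, rfl⟩), ?_⟩
      induction e using Sym2.ind; simp
    · refine ⟨Or.inl (Or.inr ⟨e, he, rfl⟩), ?_⟩
      induction e using Sym2.ind; simp

theorem wK2_liftMatching (c : ℝ) (M₁ M₂ : Finset (Sym2 V)) (T : Finset V) :
    wK2 c (liftMatching G M₁ M₂ T) = (c ^ 2) ^ #M₁ * (c ^ 2) ^ #M₂ := by
  rw [wK2, filter_isDiag_liftMatching, card_liftMatching, card_empty, add_zero, ← pow_add,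
    pow_mul]

variable [Fintype V]

variable (G) in
noncomputable def matchings : Finset (Finset (Sym2 V)) := univ.filter (IsMatchingSet G)

variable (G) in
noncomputable def matchingTriples :
    Finset ((Finset (Sym2 V) × Finset (Sym2 V)) × Finset V) :=
  univ.filter fun x => IsMatchingSet G x.1.1 ∧ IsMatchingSet G x.1.2 ∧
    x.2 ⊆ exposedVerts x.1.1 ∩ exposedVerts x.1.2

theorem sum_matchings_boxProd_top (φ : Finset (Sym2 (V × Fin 2)) → ℝ) :
    ∑ M ∈ matchings (G □ ⊤), φ M =
      ∑ x ∈ matchingTriples G, φ (liftMatching G x.1.1 x.1.2 x.2) := by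
  refine sum_nbij' (fun M => ((layerEdges G 0 M, layerEdges G 1 M), rungVerts M))
    (fun x => liftMatching G x.1.1 x.1.2 x.2) (fun M hM => ?_) (fun x hx => ?_)
    (fun M hM => ?_) (fun x _ => ?_) (fun M hM => ?_)
  · have hM := (mem_filter.1 hM).2
    simp only [matchingTriples, mem_filter, mem_univ, true_and, subset_inter_iff,
      exposedVerts, subset_compl_iff_disjoint_right]
    exact ⟨hM.preimage_map _, hM.preimage_map _, disjoint_rungVerts_coveredVerts_layerEdges hM 0,
      disjoint_rungVerts_coveredVerts_layerEdges hM 1⟩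
  · simp only [matchingTriples, mem_filter, mem_univ, true_and, subset_inter_iff,
      exposedVerts, subset_compl_iff_disjoint_right] at hx
    exact mem_filter.2 ⟨mem_univ _, isMatchingSet_liftMatching hx.1 hx.2.1 hx.2.2.1 hx.2.2.2⟩
  · exact liftMatching_layerEdges_rungVerts (mem_filter.1 hM).2.1
  · obtain ⟨h₁, h₂⟩ := layerEdges_liftMatching (G := G) x.1.1 x.1.2 x.2
    simp only [h₁, h₂, rungVerts_liftMatching]
  · rw [liftMatching_layerEdges_rungVerts (mem_filter.1 hM).2.1]

end BoxProdK2

section Counting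

variable {V : Type*} [Fintype V] {G : SimpleGraph V}

theorem card_exposedVerts_add {M : Finset (Sym2 V)} (hM : IsMatchingSet G M) :
    #(exposedVerts M) + 2 * #M = Fintype.card V := by
  rw [exposedVerts, ← card_coveredVerts hM, card_compl_add_card]

theorem mem_matchingTriples {x : (Finset (Sym2 V) × Finset (Sym2 V)) × Finset V} :
    x ∈ matchingTriples G ↔ x.1 ∈ matchings G ×ˢ matchings G ∧
      x.2 ∈ (exposedVerts x.1.1 ∩ exposedVerts x.1.2).powerset := by
  simp only [matchingTriples, matchings, mem_filter, mem_univ, true_and, mem_product,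
    mem_powerset, and_assoc]

theorem sum_matchingTriples (F : (Finset (Sym2 V) × Finset (Sym2 V)) × Finset V → ℝ) :
    ∑ x ∈ matchingTriples G, F x =
      ∑ M₁ ∈ matchings G, ∑ M₂ ∈ matchings G,
        ∑ T ∈ (exposedVerts M₁ ∩ exposedVerts M₂).powerset, F ((M₁, M₂), T) := by
  rw [sum_finset_product (matchingTriples G) (matchings G ×ˢ matchings G)
    (fun p => (exposedVerts p.1 ∩ exposedVerts p.2).powerset)
    fun _ => mem_matchingTriples, sum_product]

theorem card_add_card_add_card_le_of_mem_matchingTriples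
    {x : (Finset (Sym2 V) × Finset (Sym2 V)) × Finset V} (hx : x ∈ matchingTriples G) :
    #x.1.1 + #x.1.2 + #x.2 ≤ Fintype.card V := by
  simp only [matchingTriples, mem_filter, mem_univ, true_and, subset_inter_iff] at hx
  have h₁ := card_exposedVerts_add hx.1
  have h₂ := card_exposedVerts_add hx.2.1
  have := card_le_card hx.2.2.1
  have := card_le_card hx.2.2.2
  omega

theorem card_add_card_add_card_eq_iff {M₁ M₂ : Finset (Sym2 V)} {T : Finset V}
    (h₁ : IsMatchingSet G M₁) (h₂ : IsMatchingSet G M₂)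
    (hT : T ⊆ exposedVerts M₁ ∩ exposedVerts M₂) :
    #M₁ + #M₂ + #T = Fintype.card V ↔
      T = exposedVerts M₁ ∧ exposedVerts M₂ = exposedVerts M₁ := by
  have c₁ := card_exposedVerts_add h₁
  have c₂ := card_exposedVerts_add h₂
  rw [subset_inter_iff] at hT
  have := card_le_card hT.1
  have := card_le_card hT.2
  constructor
  · intro h
    have e₁ := eq_of_subset_of_card_le hT.1 (by omega)
    exact ⟨e₁, (eq_of_subset_of_card_le hT.2 (by omega)).symm.trans e₁⟩
  · rintro ⟨rfl, h⟩
    rw [h] at c₂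
    omega

end Counting

section Weights

variable {V : Type*} [Fintype V] (G : SimpleGraph V)

noncomputable def exposedWeight (x : ℝ) (S : Finset V) : ℝ :=
  ∑ M ∈ matchings G with exposedVerts M = S, x ^ #M

noncomputable def tripleWeight (c lam : ℝ)
    (x : (Finset (Sym2 V) × Finset (Sym2 V)) × Finset V) : ℝ :=
  (lam * c ^ 2) ^ #x.1.1 * (lam * c ^ 2) ^ #x.1.2 * lam ^ #x.2

theorem pow_mul_Zk (c lam : ℝ) (k : ℕ) :
    lam ^ k * Zk G c k =
      ∑ x ∈ matchingTriples G with #x.1.1 + #x.1.2 + #x.2 = k, tripleWeight c lam x := by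
  rw [Zk, ← filter_filter, mul_sum, sum_filter]
  change ∑ M ∈ matchings (G □ ⊤), _ = _
  rw [sum_matchings_boxProd_top, sum_filter]
  refine sum_congr rfl fun x _ => ?_
  rw [card_liftMatching]
  split_ifs with hk
  · rw [← hk, wK2_liftMatching, tripleWeight, pow_add, pow_add, mul_pow, mul_pow]
    ring
  · rfl

theorem sum_tripleWeight (c lam : ℝ) :
    ∑ x ∈ matchingTriples G, tripleWeight c lam x = ∑ S, ∑ S',
      exposedWeight G (lam * c ^ 2) S * exposedWeight G (lam * c ^ 2) S' *
        (1 + lam) ^ #(S ∩ S') := by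
  rw [sum_matchingTriples]
  calc _ = ∑ M₁ ∈ matchings G, ∑ M₂ ∈ matchings G,
        (lam * c ^ 2) ^ #M₁ * (lam * c ^ 2) ^ #M₂ *
          (1 + lam) ^ #(exposedVerts M₁ ∩ exposedVerts M₂) := by
        refine sum_congr rfl fun M₁ _ => sum_congr rfl fun M₂ _ => ?_
        simp only [tripleWeight]
        rw [← mul_sum, sum_powerset_pow_card, add_comm]
    _ = _ := sum_sum_mul_mul_fiberwise _ exposedVerts _
        (fun S S' => (1 + lam) ^ #(S ∩ S'))

theorem sum_tripleWeight_of_card_eq (c lam : ℝ) :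
    ∑ x ∈ matchingTriples G with #x.1.1 + #x.1.2 + #x.2 = Fintype.card V, tripleWeight c lam x =
      ∑ S, exposedWeight G (lam * c ^ 2) S ^ 2 * lam ^ #S := by
  rw [sum_filter, sum_matchingTriples]
  calc _ = ∑ M₁ ∈ matchings G, ∑ M₂ ∈ matchings G,
        (lam * c ^ 2) ^ #M₁ * (lam * c ^ 2) ^ #M₂ *
          if exposedVerts M₁ = exposedVerts M₂ then lam ^ #(exposedVerts M₁) else 0 := by
        refine sum_congr rfl fun M₁ h₁ => sum_congr rfl fun M₂ h₂ => ?_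
        have hiff := fun T (hT : T ∈ (exposedVerts M₁ ∩ exposedVerts M₂).powerset) =>
          card_add_card_add_card_eq_iff (mem_filter.1 h₁).2 (mem_filter.1 h₂).2
            (mem_powerset.1 hT)
        rw [sum_congr rfl fun T hT => if_congr (hiff T hT) rfl rfl]
        by_cases hU : exposedVerts M₁ = exposedVerts M₂
        · simp only [hU.symm, and_true, ite_true, tripleWeight, inter_self]
          rw [sum_ite_eq' _ _ (fun T => _ * lam ^ #T), if_pos (mem_powerset.2 subset_rfl)]
        · simp only [Ne.symm hU, hU, and_false, ite_false, sum_const_zero, mul_zero]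
    _ = ∑ S, ∑ S', exposedWeight G (lam * c ^ 2) S * exposedWeight G (lam * c ^ 2) S' *
          if S = S' then lam ^ #S else 0 :=
        sum_sum_mul_mul_fiberwise _ exposedVerts _
          (fun S S' => if S = S' then lam ^ #S else 0)
    _ = _ := by
        simp only [mul_ite, mul_zero, sum_ite_eq, mem_univ, ite_true, sq]

theorem sum_range_pow_mul_Zk (c lam : ℝ) :
    ∑ k ∈ range (Fintype.card V + 1), lam ^ k * Zk G c k =
      ∑ x ∈ matchingTriples G, tripleWeight c lam x := by
  rw [← sum_fiberwise_of_maps_to fun x hx => mem_range.2 (Nat.lt_succ_of_le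
    (card_add_card_add_card_le_of_mem_matchingTriples hx))]
  exact sum_congr rfl fun k _ => pow_mul_Zk G c lam k

theorem exposedWeight_nonneg {x : ℝ} (hx : 0 ≤ x) (S : Finset V) : 0 ≤ exposedWeight G x S :=
  sum_nonneg fun _ _ => pow_nonneg hx _

theorem one_le_exposedWeight_univ {x : ℝ} (hx : 0 ≤ x) : 1 ≤ exposedWeight G x univ := by
  have hempty : ∅ ∈ (matchings G).filter fun M => exposedVerts M = univ := by
    simp [matchings, IsMatchingSet, exposedVerts, coveredVerts]
  calc 1 = x ^ #(∅ : Finset (Sym2 V)) := by rw [card_empty, pow_zero]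
    _ ≤ exposedWeight G x univ := single_le_sum (fun M _ => pow_nonneg hx #M) hempty

theorem sum_sq_exposedWeight_pos {x lam : ℝ} (hx : 0 ≤ x) (hlam : 0 < lam) :
    0 < ∑ S, exposedWeight G x S ^ 2 * lam ^ #S := by
  have hpos : 0 < exposedWeight G x univ := one_pos.trans_le (one_le_exposedWeight_univ G hx)
  refine (by positivity : 0 < exposedWeight G x univ ^ 2 * lam ^ #(univ : Finset V)).trans_le
    (single_le_sum (f := fun S => exposedWeight G x S ^ 2 * lam ^ #S) (fun S _ => ?_) (mem_univ _))
  have := exposedWeight_nonneg G hx S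
  positivity

end Weights

theorem stmt9_general {V : Type*} [Fintype V] (G : SimpleGraph V) (hn : 1 ≤ Fintype.card V)
    (c : ℝ) :
    ∑ k ∈ Finset.range (Fintype.card V + 1),
        (4 * (Fintype.card V : ℝ) ^ 2) ^ k * Zk G c k <
      2 * (4 * (Fintype.card V : ℝ) ^ 2) ^ (Fintype.card V) * Zk G c (Fintype.card V) := by
  set n := Fintype.card V
  set lam : ℝ := 4 * (n : ℝ) ^ 2
  set t : ℝ := (2 * n + 1) / lam
  set f := exposedWeight G (lam * c ^ 2)
  have hn' : (0 : ℝ) < n := by exact_mod_cast hn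
  have hlam : 0 < lam := by positivity
  calc _ = ∑ S, ∑ S', f S * f S' * (1 + lam) ^ #(S ∩ S') := by
        rw [sum_range_pow_mul_Zk, sum_tripleWeight]
    _ ≤ (1 + t) ^ n * ∑ S, f S ^ 2 * lam ^ #S := by
        simpa only [powerset_univ, card_univ] using
          sum_powerset_mul_pow_card_inter_le hlam.le (fun _ _ => add_sq_add_mul_sq_le hn') univ f
    _ < 2 * ∑ S, f S ^ 2 * lam ^ #S :=
        mul_lt_mul_of_pos_right (one_add_pow_lt_two (by positivity) (two_mul_mul_div_lt hn'))
          (sum_sq_exposedWeight_pos G (by positivity) hlam)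
    _ = _ := by rw [mul_assoc, pow_mul_Zk, sum_tripleWeight_of_card_eq]

/-- For every finite simple graph `G` with `n = |V| ≥ 1` and every `c > 0`, the rescaled
weighted matching partition function of `G □ K₂` satisfies
`Σ_{k=0}^{n} (4n²)^k·Z_k < 2·(4n²)^n·Z_n`: under edge weights `λ' = 4n²·λ`, the total
weight of all matchings is strictly less than twice the total weight of perfect matchings. -/
theorem stmt9 {V : Type*} [Fintype V] (G : SimpleGraph V) (hn : 1 ≤ Fintype.card V)
    (c : ℝ) (hc : 0 < c) :
    ∑ k ∈ Finset.range (Fintype.card V + 1),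
        (4 * (Fintype.card V : ℝ) ^ 2) ^ k * Zk G c k <
      2 * (4 * (Fintype.card V : ℝ) ^ 2) ^ (Fintype.card V) * Zk G c (Fintype.card V) :=
  stmt9_general G hn c
end

section
/- Let Ω be a finite set, let μ be a probability distribution on Ω, let δ ≥ 0, and let g: Ω → ℝ satisfy e^{−δ} ≤ g(ω) ≤ 1 for all ω ∈ Ω. Define the probability distribution ν on Ω by ν(ω) = μ(ω)·g(ω) / Σ_{ω'∈Ω} μ(ω')·g(ω'). Then dist_TV(μ, ν) ≤ 1 − e^{−δ} ≤ δ. -/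
/-- Let `Ω` be a finite set, `μ` a probability distribution on `Ω`, `δ ≥ 0`, and
`g : Ω → ℝ` with `e^{−δ} ≤ g(ω) ≤ 1` for all `ω`. Define the probability distribution
`ν(ω) = μ(ω)·g(ω) / Σ_{ω'} μ(ω')·g(ω')`. Then
`dist_TV(μ, ν) ≤ 1 − e^{−δ} ≤ δ`. -/
theorem stmt10 {Ω : Type*} [Fintype Ω] (μ : Ω → ℝ) (hμ0 : ∀ ω, 0 ≤ μ ω)
    (hμ1 : ∑ ω, μ ω = 1) (δ : ℝ) (hδ : 0 ≤ δ) (g : Ω → ℝ)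
    (hg1 : ∀ ω, Real.exp (-δ) ≤ g ω) (hg2 : ∀ ω, g ω ≤ 1)
    (ν : Ω → ℝ) (hν : ∀ ω, ν ω = μ ω * g ω / ∑ ω', μ ω' * g ω') :
    (1 / 2) * ∑ ω, |μ ω - ν ω| ≤ 1 - Real.exp (-δ) ∧ 1 - Real.exp (-δ) ≤ δ := by
  have hexp : 0 < Real.exp (-δ) := Real.exp_pos _
  set S : ℝ := ∑ ω', μ ω' * g ω' with hS
  have hSge : Real.exp (-δ) ≤ S := by
    calc Real.exp (-δ) = ∑ ω, μ ω * Real.exp (-δ) := by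
          rw [← Finset.sum_mul, hμ1, one_mul]
      _ ≤ S := Finset.sum_le_sum fun ω _ =>
          mul_le_mul_of_nonneg_left (hg1 ω) (hμ0 ω)
  have hSpos : 0 < S := lt_of_lt_of_le hexp hSge
  have hSle : S ≤ 1 := by
    calc S ≤ ∑ ω, μ ω := Finset.sum_le_sum fun ω _ => by
          calc μ ω * g ω ≤ μ ω * 1 := mul_le_mul_of_nonneg_left (hg2 ω) (hμ0 ω)
            _ = μ ω := mul_one _
      _ = 1 := hμ1
  have hν1 : ∑ ω, ν ω = 1 := by
    simp only [hν]
    rw [← Finset.sum_div, ← hS, div_self (ne_of_gt hSpos)]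
  have hdiff : ∑ ω, (μ ω - ν ω) = 0 := by
    rw [Finset.sum_sub_distrib, hμ1, hν1, sub_self]
  have habs : ∀ x : ℝ, |x| = 2 * max x 0 - x := by
    intro x
    rcases le_total x 0 with h | h
    · rw [max_eq_right h, abs_of_nonpos h]; ring
    · rw [max_eq_left h, abs_of_nonneg h]; ring
  have hkey : ∀ ω, max (μ ω - ν ω) 0 ≤ μ ω * (1 - Real.exp (-δ)) := by
    intro ω
    have h1 : 0 ≤ μ ω * (1 - Real.exp (-δ)) :=
      mul_nonneg (hμ0 ω) (by linarith [Real.exp_le_one_iff.mpr (neg_nonpos.mpr hδ)])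
    have h2 : μ ω - ν ω ≤ μ ω * (1 - Real.exp (-δ)) := by
      rw [hν]
      have : μ ω * Real.exp (-δ) ≤ μ ω * g ω / S := by
        rw [le_div_iff₀ hSpos]
        calc μ ω * Real.exp (-δ) * S ≤ μ ω * Real.exp (-δ) * 1 := by
              apply mul_le_mul_of_nonneg_left hSle
              exact mul_nonneg (hμ0 ω) hexp.le
          _ = μ ω * Real.exp (-δ) := mul_one _
          _ ≤ μ ω * g ω := mul_le_mul_of_nonneg_left (hg1 ω) (hμ0 ω)
      nlinarith
    exact max_le h2 h1
  constructor
  · have : ∑ ω, |μ ω - ν ω| = 2 * ∑ ω, max (μ ω - ν ω) 0 := by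
      simp only [habs]
      rw [Finset.sum_sub_distrib, hdiff, sub_zero, ← Finset.mul_sum]
    rw [this]
    have hsum : ∑ ω, max (μ ω - ν ω) 0 ≤ 1 - Real.exp (-δ) := by
      calc ∑ ω, max (μ ω - ν ω) 0 ≤ ∑ ω, μ ω * (1 - Real.exp (-δ)) :=
            Finset.sum_le_sum fun ω _ => hkey ω
        _ = 1 - Real.exp (-δ) := by rw [← Finset.sum_mul, hμ1, one_mul]
    linarith
  · linarith [Real.add_one_le_exp (-δ)]
end

section
/- Let A be a nonnegative m×n real matrix (1≤n≤m) such that Σ_{z∈Φ_{m,n}} Perm(A_z)²/∏_j z_j! > 0, let ε ∈ (0,1), and set k = ⌈4n²/ε⌉. Let μ_BS be the probability distribution on Φ_{m,n} with μ_BS(z) ∝ Perm(A_z)²/∏_{j=1}^m z_j!, and let ν be the probability distribution on Φ_{m,n} with ν(z) ∝ (∏_{j=1}^m C(k,z_j))·Perm(A_z)², where C(k,z_j) is the binomial coefficient. Then dist_TV(ν, μ_BS) ≤ ε/2. -/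
/-!
Since `C(k, z_j) = (k)_{z_j} / z_j!` with `(k)_r = k (k - 1) ⋯ (k - r + 1)`, `ν` is `μ_BS`
reweighted by `W z = ∏_j (k)_{z_j}`. For `∑_j z_j = n` we have `(k - n)^n ≤ W z ≤ k^n`, and
Bernoulli's inequality gives `(k - n)^n ≥ (1 - n²/k) k^n ≥ (1 - ε/4) k^n`. Reweighting a
distribution by weights in `[L, U]` moves it by at most `(U - L)/L` in `ℓ¹`, here
`(ε/4)/(1 - ε/4) ≤ ε`.
-/

open scoped Classical

/-- `permA A z` is the permanent of the `n × n` matrix `A_z` formed by stacking `z j`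
copies of row `j` of `A` for each `j`: the sum over all bijections `σ` from the rows of
`A_z` (indexed by `Σ j, Fin (z j)`) to the columns of `∏ i, A_{row(σ⁻¹ i), i}`. -/
noncomputable def permA {m n : ℕ} (A : Matrix (Fin m) (Fin n) ℝ) (z : Fin m → ℕ) : ℝ :=
  ∑ σ : ((j : Fin m) × Fin (z j)) ≃ Fin n, ∏ i : Fin n, A (σ.symm i).1 i

open Finset

section Reweighting

variable {ι : Type*} (s : Finset ι) (u w : ι → ℝ) {L U : ℝ}

lemma abs_mul_sum_sub_sum_mul_le (hu : ∀ i ∈ s, 0 ≤ u i) (hw : ∀ i ∈ s, w i ∈ Set.Icc L U)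
    {i : ι} (hi : i ∈ s) :
    |w i * ∑ j ∈ s, u j - ∑ j ∈ s, w j * u j| ≤ (U - L) * ∑ j ∈ s, u j := by
  have hdiff : w i * ∑ j ∈ s, u j - ∑ j ∈ s, w j * u j = ∑ j ∈ s, u j * (w i - w j) := by
    rw [mul_sum, ← sum_sub_distrib]
    exact sum_congr rfl fun j _ => by ring
  rw [hdiff, mul_sum]
  refine (abs_sum_le_sum_abs _ _).trans (sum_le_sum fun j hj => ?_)
  obtain ⟨hLi, hiU⟩ := hw i hi
  obtain ⟨hLj, hjU⟩ := hw j hj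
  rw [abs_mul, abs_of_nonneg (hu j hj), mul_comm]
  exact mul_le_mul_of_nonneg_right (abs_sub_le_iff.2 ⟨by linarith, by linarith⟩) (hu j hj)

theorem sum_abs_reweight_sub_le (hu : ∀ i ∈ s, 0 ≤ u i) (hS : 0 < ∑ i ∈ s, u i) (hL : 0 < L)
    (hw : ∀ i ∈ s, w i ∈ Set.Icc L U) :
    ∑ i ∈ s, |w i * u i / ∑ j ∈ s, w j * u j - u i / ∑ j ∈ s, u j| ≤ (U - L) / L := by
  set S := ∑ j ∈ s, u j
  set C := ∑ j ∈ s, w j * u j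
  have hLC : L * S ≤ C := by
    rw [mul_sum]
    exact sum_le_sum fun j hj => mul_le_mul_of_nonneg_right (hw j hj).1 (hu j hj)
  have hC : 0 < C := (mul_pos hL hS).trans_le hLC
  have hterm : ∀ i ∈ s, |w i * u i / C - u i / S| ≤ u i * ((U - L) / L) / S := by
    intro i hi
    have hsplit : w i * u i / C - u i / S = u i * (w i * S - C) / (C * S) := by
      field_simp
    rw [hsplit, abs_div, abs_mul, abs_of_nonneg (hu i hi), abs_of_pos (mul_pos hC hS),
      div_le_div_iff₀ (mul_pos hC hS) hS]
    have hUL : 0 ≤ U - L := by linarith [(hw i hi).1, (hw i hi).2]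
    calc u i * |w i * S - C| * S ≤ u i * ((U - L) * S) * S := by
          gcongr
          · exact hu i hi
          · exact abs_mul_sum_sub_sum_mul_le s u w hu hw hi
      _ = u i * ((U - L) / L) * (L * S) * S := by field_simp
      _ ≤ u i * ((U - L) / L) * C * S := by
          gcongr
          exact mul_nonneg (hu i hi) (div_nonneg hUL hL.le)
      _ = u i * ((U - L) / L) * (C * S) := by ring
  calc ∑ i ∈ s, |w i * u i / C - u i / S| ≤ ∑ i ∈ s, u i * ((U - L) / L) / S :=
        sum_le_sum hterm
    _ = (U - L) / L := by rw [← sum_div, ← sum_mul, mul_div_right_comm, div_self hS.ne', one_mul]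

end Reweighting

section DescFactorial

variable {ι : Type*} (s : Finset ι) (z : ι → ℕ) (k : ℕ)

lemma prod_descFactorial_le_pow_sum :
    ∏ j ∈ s, k.descFactorial (z j) ≤ k ^ ∑ j ∈ s, z j := by
  rw [← prod_pow_eq_pow_sum]
  exact prod_le_prod' fun j _ => Nat.descFactorial_le_pow k (z j)

lemma sub_sum_pow_sum_le_prod_descFactorial :
    (k - ∑ j ∈ s, z j) ^ ∑ j ∈ s, z j ≤ ∏ j ∈ s, k.descFactorial (z j) := by
  rw [← prod_pow_eq_pow_sum]
  refine prod_le_prod' fun j hj => le_trans ?_ (Nat.pow_sub_le_descFactorial k (z j))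
  have := single_le_sum (fun i _ => Nat.zero_le (z i)) hj
  exact Nat.pow_le_pow_left (by omega) _

end DescFactorial

lemma one_sub_sq_div_mul_pow_le_sub_pow {n k : ℕ} (hnk : n ≤ k) :
    (1 - (n : ℝ) ^ 2 / k) * (k : ℝ) ^ n ≤ ((k : ℝ) - n) ^ n := by
  rcases (Nat.zero_le k).eq_or_lt with rfl | hk
  · obtain rfl : n = 0 := by omega
    simp
  have hkR : (0 : ℝ) < k := by exact_mod_cast hk
  have hbase : (-2 : ℝ) ≤ -(n / k) := by
    have : (n : ℝ) / k ≤ 1 := (div_le_one hkR).2 (by exact_mod_cast hnk)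
    linarith
  calc (1 - (n : ℝ) ^ 2 / k) * (k : ℝ) ^ n = (1 + n * -(n / k)) * (k : ℝ) ^ n := by ring
    _ ≤ (1 + -(n / k)) ^ n * (k : ℝ) ^ n := by
        gcongr
        exact one_add_mul_le_pow hbase n
    _ = ((k : ℝ) - n) ^ n := by
        rw [← mul_pow]
        congr 1
        field_simp
        ring

lemma prod_descFactorial_mem_Icc {ι : Type*} (s : Finset ι) (z : ι → ℕ) {n k : ℕ}
    (hz : ∑ j ∈ s, z j = n) (hnk : n ≤ k) :
    (∏ j ∈ s, (k.descFactorial (z j) : ℝ)) ∈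
      Set.Icc ((1 - (n : ℝ) ^ 2 / k) * (k : ℝ) ^ n) ((k : ℝ) ^ n) := by
  rw [← Nat.cast_prod]
  constructor
  · calc (1 - (n : ℝ) ^ 2 / k) * (k : ℝ) ^ n ≤ ((k : ℝ) - n) ^ n :=
          one_sub_sq_div_mul_pow_le_sub_pow hnk
      _ = ((k - n) ^ n : ℕ) := by push_cast [hnk]; rfl
      _ ≤ _ := by
          exact_mod_cast hz ▸ sub_sum_pow_sum_le_prod_descFactorial s z k
  · exact_mod_cast hz ▸ prod_descFactorial_le_pow_sum s z k

lemma prod_choose_mul_eq {ι : Type*} (s : Finset ι) (z : ι → ℕ) (k : ℕ) (x : ℝ) :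
    (∏ j ∈ s, (k.choose (z j) : ℝ)) * x =
      (∏ j ∈ s, (k.descFactorial (z j) : ℝ)) * (x / ∏ j ∈ s, ((z j).factorial : ℝ)) := by
  simp only [Nat.descFactorial_eq_factorial_mul_choose, Nat.cast_mul, prod_mul_distrib]
  have : (∏ j ∈ s, ((z j).factorial : ℝ)) ≠ 0 := prod_ne_zero_iff.2 fun j _ => by positivity
  field_simp

lemma le_and_sq_div_le_of_eq_ceil {n k : ℕ} {ε : ℝ} (hε0 : 0 < ε) (hε1 : ε < 1)
    (hk : k = ⌈4 * (n : ℝ) ^ 2 / ε⌉₊) :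
    n ≤ k ∧ (n : ℝ) ^ 2 / k ≤ ε / 4 := by
  have hεk : 4 * (n : ℝ) ^ 2 ≤ ε * k := by
    rw [← div_le_iff₀' hε0, hk]
    exact Nat.le_ceil _
  have hn_sq : (n : ℝ) ≤ n ^ 2 := by exact_mod_cast Nat.le_self_pow two_ne_zero n
  refine ⟨by exact_mod_cast (show (n : ℝ) ≤ k by nlinarith), ?_⟩
  rcases (Nat.zero_le k).eq_or_lt with hk0 | hk0
  · rw [← hk0, Nat.cast_zero, div_zero]
    positivity
  · rw [div_le_iff₀ (by exact_mod_cast hk0)]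
    linarith

theorem stmt14_general {m n : ℕ} (A : Matrix (Fin m) (Fin n) ℝ)
    (ε : ℝ) (hε : ε ∈ Set.Ioo (0 : ℝ) 1) (k : ℕ)
    (hk : k = ⌈4 * (n : ℝ) ^ 2 / ε⌉₊)
    (hpos : 0 < ∑ z ∈ Finset.Nat.antidiagonalTuple m n,
        permA A z ^ 2 / ∏ j, ((z j).factorial : ℝ))
    (μBS ν : (Fin m → ℕ) → ℝ)
    (hμBS : ∀ z ∈ Finset.Nat.antidiagonalTuple m n,
      μBS z = (permA A z ^ 2 / ∏ j, ((z j).factorial : ℝ)) /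
        ∑ y ∈ Finset.Nat.antidiagonalTuple m n,
          permA A y ^ 2 / ∏ j, ((y j).factorial : ℝ))
    (hν : ∀ z ∈ Finset.Nat.antidiagonalTuple m n,
      ν z = ((∏ j, (k.choose (z j) : ℝ)) * permA A z ^ 2) /
        ∑ y ∈ Finset.Nat.antidiagonalTuple m n,
          (∏ j, (k.choose (y j) : ℝ)) * permA A y ^ 2) :
    (1 / 2) * ∑ z ∈ Finset.Nat.antidiagonalTuple m n, |ν z - μBS z| ≤ ε / 2 := by
  obtain ⟨hε0, hε1⟩ := hε
  obtain ⟨hnk, hsq⟩ := le_and_sq_div_le_of_eq_ceil hε0 hε1 hk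
  have hpow : (0 : ℝ) < (k : ℝ) ^ n := by
    rcases n.eq_zero_or_pos with rfl | hn
    · simp
    · exact pow_pos (by exact_mod_cast hn.trans_le hnk) n
  have hW : ∀ z ∈ Finset.Nat.antidiagonalTuple m n, (∏ j, (k.descFactorial (z j) : ℝ)) ∈
      Set.Icc ((1 - ε / 4) * (k : ℝ) ^ n) ((k : ℝ) ^ n) := fun z hz => by
    have := prod_descFactorial_mem_Icc univ z (Finset.Nat.mem_antidiagonalTuple.1 hz) hnk
    exact ⟨le_trans (by gcongr) this.1, this.2⟩
  have hTV := sum_abs_reweight_sub_le _ _ _ (fun z _ => by positivity) hpos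
    (mul_pos (by linarith) hpow) hW
  simp only [← prod_choose_mul_eq] at hTV
  rw [sum_congr rfl fun z hz => by rw [hν z hz, hμBS z hz]]
  have hbound : ((k : ℝ) ^ n - (1 - ε / 4) * (k : ℝ) ^ n) / ((1 - ε / 4) * (k : ℝ) ^ n) ≤ ε := by
    rw [div_le_iff₀ (mul_pos (by linarith) hpow)]
    nlinarith [mul_pos (mul_pos hε0 hpow) (by linarith : (0 : ℝ) < 3 - ε)]
  linarith

/-- Let `A` be a nonnegative `m × n` real matrix (`1 ≤ n ≤ m`) with
`Σ_{z ∈ Φ_{m,n}} Perm(A_z)²/∏_j z_j! > 0`, let `ε ∈ (0,1)`, and set `k = ⌈4n²/ε⌉`.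
Let `μ_BS` be the distribution on `Φ_{m,n}` (the tuples in `ℕ^m` summing to `n`) with
`μ_BS(z) ∝ Perm(A_z)²/∏_j z_j!`, and let `ν` be the distribution on `Φ_{m,n}` with
`ν(z) ∝ (∏_j C(k, z_j))·Perm(A_z)²`. Then `dist_TV(ν, μ_BS) ≤ ε/2`. -/
theorem stmt14 {m n : ℕ} (hn : 1 ≤ n) (hnm : n ≤ m) (A : Matrix (Fin m) (Fin n) ℝ)
    (hA : ∀ j i, 0 ≤ A j i) (ε : ℝ) (hε : ε ∈ Set.Ioo (0 : ℝ) 1) (k : ℕ)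
    (hk : k = ⌈4 * (n : ℝ) ^ 2 / ε⌉₊)
    (hpos : 0 < ∑ z ∈ Finset.Nat.antidiagonalTuple m n,
        permA A z ^ 2 / ∏ j, ((z j).factorial : ℝ))
    (μBS ν : (Fin m → ℕ) → ℝ)
    (hμBS : ∀ z ∈ Finset.Nat.antidiagonalTuple m n,
      μBS z = (permA A z ^ 2 / ∏ j, ((z j).factorial : ℝ)) /
        ∑ y ∈ Finset.Nat.antidiagonalTuple m n,
          permA A y ^ 2 / ∏ j, ((y j).factorial : ℝ))
    (hν : ∀ z ∈ Finset.Nat.antidiagonalTuple m n,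
      ν z = ((∏ j, (k.choose (z j) : ℝ)) * permA A z ^ 2) /
        ∑ y ∈ Finset.Nat.antidiagonalTuple m n,
          (∏ j, (k.choose (y j) : ℝ)) * permA A y ^ 2) :
    (1 / 2) * ∑ z ∈ Finset.Nat.antidiagonalTuple m n, |ν z - μBS z| ≤ ε / 2 :=
  stmt14_general A ε hε k hk hpos μBS ν hμBS hν
end
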